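/- arXiv:1209.0998 — 10 statements merged into one kernel-verified Lean document; each statement's English description precedes it below -/
import Mathlib

section
/- Let p be a positive even integer and N ≥ 1 a real number. If a₁, …, a_{p/2}, b₁, …, b_{p/2} ∈ [N, N+1] satisfy Σᵢ aᵢ − Σᵢ bᵢ ∈ [1/4, 1/2], then (N − 3p)/2 ≤ Σᵢ λ(aᵢ) − Σᵢ λ(bᵢ) ≤ p(4N + 5)/4. In particular, for N large the resonance quantity Σᵢ λ(aᵢ) − Σᵢ λ(bᵢ) is comparable to N. -/
noncomputable def lam (x : ℝ) : ℝ := Real.sqrt (x ^ 2 + x ^ 4)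

lemma lam_lb (x : ℝ) : x ^ 2 ≤ lam x := by
  have h : x ^ 2 = Real.sqrt (x ^ 4) := by
    rw [show x ^ 4 = (x ^ 2) ^ 2 by ring, Real.sqrt_sq (sq_nonneg x)]
  rw [h]
  exact Real.sqrt_le_sqrt (by nlinarith [sq_nonneg x])

lemma lam_ub (x : ℝ) : lam x ≤ x ^ 2 + 1 / 2 := by
  have h : lam x ≤ Real.sqrt ((x ^ 2 + 1 / 2) ^ 2) :=
    Real.sqrt_le_sqrt (by nlinarith [sq_nonneg x])
  rwa [Real.sqrt_sq (by positivity)] at h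

theorem resonance_even_comparable (p : ℕ) (hp : 0 < p) (hpe : Even p) (N : ℝ) (hN : 1 ≤ N)
    (a b : Fin (p / 2) → ℝ)
    (ha : ∀ i, a i ∈ Set.Icc N (N + 1)) (hb : ∀ i, b i ∈ Set.Icc N (N + 1))
    (hξ : ((∑ i, a i) - (∑ i, b i)) ∈ Set.Icc (1/4 : ℝ) (1/2 : ℝ)) :
    (N - 3 * p) / 2 ≤ (∑ i, lam (a i)) - (∑ i, lam (b i)) ∧
      (∑ i, lam (a i)) - (∑ i, lam (b i)) ≤ p * (4 * N + 5) / 4 := by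
  obtain ⟨k, hk⟩ := hpe
  have hmnat : p / 2 = k := by omega
  have hk1 : 1 ≤ k := by omega
  have hpval : (p : ℝ) = 2 * k := by exact_mod_cast (by omega : p = 2 * k)
  have hkR : (1 : ℝ) ≤ k := by exact_mod_cast hk1
  -- per-index bounds on a i ^ 2 - b i ^ 2 - 2 N (a i - b i)
  have h1 : ∀ i, (a i) ^ 2 - (b i) ^ 2 - 2 * N * (a i - b i) ≤ 1 := by
    intro i
    obtain ⟨ha1, ha2⟩ := ha i
    obtain ⟨hb1, hb2⟩ := hb i
    nlinarith [sq_nonneg (b i - N), sq_nonneg (a i - N), mul_nonneg (sub_nonneg.2 ha1) (sub_nonneg.2 (by linarith : a i ≤ N + 1)), mul_nonneg (sub_nonneg.2 ha1) (sub_nonneg.2 ha2)]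
  have h2 : ∀ i, (-1 : ℝ) ≤ (a i) ^ 2 - (b i) ^ 2 - 2 * N * (a i - b i) := by
    intro i
    obtain ⟨ha1, ha2⟩ := ha i
    obtain ⟨hb1, hb2⟩ := hb i
    nlinarith [sq_nonneg (a i - N), sq_nonneg (b i - N), mul_nonneg (sub_nonneg.2 hb1) (sub_nonneg.2 hb2)]
  have card : (Finset.univ : Finset (Fin (p / 2))).card = p / 2 := by simp
  have E : ∑ i, ((a i) ^ 2 - (b i) ^ 2 - 2 * N * (a i - b i))
      = (∑ i, (a i) ^ 2) - (∑ i, (b i) ^ 2) - 2 * N * ((∑ i, a i) - (∑ i, b i)) := by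
    rw [Finset.sum_sub_distrib, Finset.sum_sub_distrib, ← Finset.mul_sum,
      Finset.sum_sub_distrib]
  have S1 : (∑ i, (a i) ^ 2) - (∑ i, (b i) ^ 2) - 2 * N * ((∑ i, a i) - (∑ i, b i)) ≤ k := by
    rw [← E]
    calc ∑ i, ((a i) ^ 2 - (b i) ^ 2 - 2 * N * (a i - b i))
        ≤ ∑ _i : Fin (p / 2), (1 : ℝ) := Finset.sum_le_sum fun i _ => h1 i
      _ = k := by simp [card, hmnat]
  have S2 : (k : ℝ) * (-1) ≤ (∑ i, (a i) ^ 2) - (∑ i, (b i) ^ 2)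
      - 2 * N * ((∑ i, a i) - (∑ i, b i)) := by
    rw [← E]
    calc ((k : ℝ)) * (-1) = ∑ _i : Fin (p / 2), (-1 : ℝ) := by simp [card, hmnat]
      _ ≤ ∑ i, ((a i) ^ 2 - (b i) ^ 2 - 2 * N * (a i - b i)) :=
        Finset.sum_le_sum fun i _ => h2 i
  -- lam sum bounds
  have LA1 : (∑ i, (a i) ^ 2) ≤ ∑ i, lam (a i) := Finset.sum_le_sum fun i _ => lam_lb (a i)
  have LB1 : (∑ i, (b i) ^ 2) ≤ ∑ i, lam (b i) := Finset.sum_le_sum fun i _ => lam_lb (b i)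
  have LA2 : (∑ i, lam (a i)) ≤ (∑ i, (a i) ^ 2) + k * (1 / 2) := by
    calc (∑ i, lam (a i)) ≤ ∑ i, ((a i) ^ 2 + 1 / 2) :=
          Finset.sum_le_sum fun i _ => lam_ub (a i)
      _ = (∑ i, (a i) ^ 2) + k * (1 / 2) := by
          rw [Finset.sum_add_distrib]; simp [card, hmnat]
  have LB2 : (∑ i, lam (b i)) ≤ (∑ i, (b i) ^ 2) + k * (1 / 2) := by
    calc (∑ i, lam (b i)) ≤ ∑ i, ((b i) ^ 2 + 1 / 2) :=
          Finset.sum_le_sum fun i _ => lam_ub (b i)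
      _ = (∑ i, (b i) ^ 2) + k * (1 / 2) := by
          rw [Finset.sum_add_distrib]; simp [card, hmnat]
  obtain ⟨hξ1, hξ2⟩ := hξ
  have hNpos : (0 : ℝ) ≤ 2 * N := by linarith
  have T1 : 2 * N * (1 / 4) ≤ 2 * N * ((∑ i, a i) - (∑ i, b i)) :=
    mul_le_mul_of_nonneg_left hξ1 hNpos
  have T2 : 2 * N * ((∑ i, a i) - (∑ i, b i)) ≤ 2 * N * (1 / 2) :=
    mul_le_mul_of_nonneg_left hξ2 hNpos
  constructor
  · rw [hpval]; nlinarith [hkR, hN]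
  · rw [hpval]; nlinarith [mul_le_mul_of_nonneg_right hkR (by linarith : (0:ℝ) ≤ N)]
end

section
/- Let p > 1 be an odd integer and let N > 2p + 2 be a real number. For every representation ξ = ε₁a₁ + ⋯ + ε_p a_p with εⱼ ∈ {+1, −1}, aⱼ ∈ A_N, and ξ ∈ I_p, the associated counts satisfy n₁ − n₂ + 2(n₃ − n₄) = 0. -/
def AtildeN (p : ℕ) (N : ℝ) : Set ℝ :=
  Set.Icc (N + 3 * ((p : ℝ) - 1) / (2 * (p : ℝ) ^ 2))
          (N + 3 * ((p : ℝ) + 2) / (2 * (p : ℝ) ^ 2))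

def Atilde2N (p : ℕ) (N : ℝ) : Set ℝ :=
  Set.Icc (2 * N) (2 * N + 3 / (p : ℝ) ^ 2)

def AN (p : ℕ) (N : ℝ) : Set ℝ := AtildeN p N ∪ Atilde2N p N

def Ip (p : ℕ) : Set ℝ :=
  if p % 3 = 0 then Set.Icc (1 - 2 / (p : ℝ)) (1 + 2 / (p : ℝ))
  else if p % 3 = 1 then
    Set.Icc (1 - 3 / (p : ℝ) - 4 / (p : ℝ) ^ 2) (1 - 2 / (p : ℝ) - 8 / (p : ℝ) ^ 2)
  else Set.Icc (1 - 4 / (p : ℝ) + 4 / (p : ℝ) ^ 2) (1 - 4 / (p : ℝ) ^ 2)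

set_option maxHeartbeats 1000000 in
theorem counts_linear_relation (p : ℕ) (hp1 : 1 < p) (hpodd : Odd p) (N : ℝ) (hN : 2 * (p : ℝ) + 2 < N)
    (ε a : Fin p → ℝ) (hε : ∀ j, ε j = 1 ∨ ε j = -1) (ha : ∀ j, a j ∈ AN p N)
    (hξ : (∑ j, ε j * a j) ∈ Ip p) :
    (({j : Fin p | a j ∈ AtildeN p N ∧ ε j = 1}.ncard : ℤ) - ({j : Fin p | a j ∈ AtildeN p N ∧ ε j = -1}.ncard : ℤ))
      + 2 * (({j : Fin p | a j ∈ Atilde2N p N ∧ ε j = 1}.ncard : ℤ) - ({j : Fin p | a j ∈ Atilde2N p N ∧ ε j = -1}.ncard : ℤ)) = 0 := by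
  classical
  have hp3 : 3 ≤ p := by obtain ⟨k, hk⟩ := hpodd; omega
  have hpR : (3:ℝ) ≤ (p:ℝ) := by exact_mod_cast hp3
  have hp0 : (0:ℝ) < (p:ℝ) := by linarith
  have hN8 : (8:ℝ) < N := by linarith
  have hdisj : ∀ j, a j ∈ AtildeN p N → a j ∉ Atilde2N p N := by
    intro j h1 h2
    simp only [AtildeN, Set.mem_Icc] at h1
    simp only [Atilde2N, Set.mem_Icc] at h2
    have hle : 3 * ((p:ℝ) + 2) / (2 * (p:ℝ)^2) ≤ 1 := by
      rw [div_le_one (by positivity)]; nlinarith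
    linarith [h1.2, h2.1]
  set w : Fin p → ℝ := fun j => if a j ∈ AtildeN p N then 1 else 2 with hw
  have hwval : ∀ j, |a j - w j * N| ≤ 3 / (p:ℝ) := by
    intro j
    by_cases h : a j ∈ AtildeN p N
    · simp only [hw, if_pos h]
      simp only [AtildeN, Set.mem_Icc] at h
      have h1 : (0:ℝ) ≤ 3 * ((p:ℝ) - 1) / (2 * (p:ℝ)^2) := by
        apply div_nonneg _ (by positivity); nlinarith
      have h2 : 3 * ((p:ℝ) + 2) / (2 * (p:ℝ)^2) ≤ 3 / (p:ℝ) := by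
        rw [div_le_div_iff₀ (by positivity) hp0]; nlinarith
      have h3 : (0:ℝ) < 3 / (p:ℝ) := by positivity
      rw [abs_le]; constructor <;> nlinarith [h.1, h.2]
    · have h2 : a j ∈ Atilde2N p N := (ha j).resolve_left h
      simp only [hw, if_neg h]
      simp only [Atilde2N, Set.mem_Icc] at h2
      have h3 : 3 / (p:ℝ)^2 ≤ 3 / (p:ℝ) := by
        rw [div_le_div_iff₀ (by positivity) hp0]; nlinarith
      have h4 : (0:ℝ) < 3 / (p:ℝ) := by positivity
      rw [abs_le]; constructor <;> nlinarith [h2.1, h2.2]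
  set m : ℤ := (({j : Fin p | a j ∈ AtildeN p N ∧ ε j = 1}.ncard : ℤ)
      - ({j : Fin p | a j ∈ AtildeN p N ∧ ε j = -1}.ncard : ℤ))
      + 2 * (({j : Fin p | a j ∈ Atilde2N p N ∧ ε j = 1}.ncard : ℤ)
      - ({j : Fin p | a j ∈ Atilde2N p N ∧ ε j = -1}.ncard : ℤ)) with hm
  show m = 0
  have hcard : ∀ (P : Fin p → Prop), (({j : Fin p | P j}.ncard : ℕ) : ℝ)
      = ∑ j : Fin p, (if P j then (1:ℝ) else 0) := by
    intro P
    rw [Set.ncard_eq_toFinset_card']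
    rw [Set.toFinset_setOf, Finset.card_filter]
    push_cast
    exact Finset.sum_congr rfl (fun j _ => by split <;> simp)
  have hmsum : (m:ℝ) = ∑ j, ε j * w j := by
    rw [hm]
    push_cast
    rw [hcard, hcard, hcard, hcard]
    rw [← Finset.sum_sub_distrib, ← Finset.sum_sub_distrib, Finset.mul_sum,
      ← Finset.sum_add_distrib]
    apply Finset.sum_congr rfl
    intro j _
    by_cases h1 : a j ∈ AtildeN p N
    · have h2 : a j ∉ Atilde2N p N := hdisj j h1
      rcases hε j with he | he <;> simp [hw, h1, h2, he] <;> norm_num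
    · have h2 : a j ∈ Atilde2N p N := (ha j).resolve_left h1
      rcases hε j with he | he <;> simp [hw, h1, h2, he] <;> norm_num
  have hb : |(∑ j, ε j * a j) - (m:ℝ) * N| ≤ 3 := by
    rw [hmsum, Finset.sum_mul, ← Finset.sum_sub_distrib]
    calc |∑ j, (ε j * a j - ε j * w j * N)| ≤ ∑ j, |ε j * a j - ε j * w j * N| :=
          Finset.abs_sum_le_sum_abs _ _
      _ ≤ ∑ _j : Fin p, 3 / (p:ℝ) := by
          apply Finset.sum_le_sum
          intro j _
          have heq : ε j * a j - ε j * w j * N = ε j * (a j - w j * N) := by ring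
          rw [heq, abs_mul]
          have he : |ε j| = 1 := by rcases hε j with h | h <;> simp [h]
          rw [he, one_mul]
          exact hwval j
      _ = 3 := by
          rw [Finset.sum_const, Finset.card_univ, Fintype.card_fin, nsmul_eq_mul]
          field_simp
  have hξb : -3 ≤ (∑ j, ε j * a j) ∧ (∑ j, ε j * a j) ≤ 3 := by
    have h2p : 2 / (p:ℝ) ≤ 1 := by rw [div_le_one hp0]; linarith
    have h2p0 : (0:ℝ) ≤ 2 / (p:ℝ) := by positivity
    have h3p : 3 / (p:ℝ) ≤ 1 := by rw [div_le_one hp0]; linarith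
    have h4p : 4 / (p:ℝ) ≤ 2 := by rw [div_le_iff₀ hp0]; linarith
    have h4p0 : (0:ℝ) ≤ 4 / (p:ℝ) := by positivity
    have h4p2 : 4 / (p:ℝ)^2 ≤ 1 := by rw [div_le_one (by positivity)]; nlinarith
    have h4p20 : (0:ℝ) ≤ 4 / (p:ℝ)^2 := by positivity
    have h8p20 : (0:ℝ) ≤ 8 / (p:ℝ)^2 := by positivity
    unfold Ip at hξ
    split_ifs at hξ <;> simp only [Set.mem_Icc] at hξ <;>
      exact ⟨by linarith [hξ.1], by linarith [hξ.2]⟩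
  have hmN : |(m:ℝ) * N| ≤ 6 := by
    have h0 := abs_sub_abs_le_abs_sub ((m:ℝ) * N) (∑ j, ε j * a j)
    rw [abs_sub_comm] at hb
    have h1 : |∑ j, ε j * a j| ≤ 3 := abs_le.mpr hξb
    linarith [le_trans h0 hb]
  have hm1 : |(m:ℝ)| < 1 := by
    rw [abs_mul, abs_of_pos (by linarith : (0:ℝ) < N)] at hmN
    by_contra h
    push_neg at h
    nlinarith
  have habs : -1 < m ∧ m < 1 := abs_lt.mp
    (by exact_mod_cast (by rwa [← Int.cast_abs] at hm1 : ((|m|:ℤ):ℝ) < 1))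
  omega
end

section
/- Let p > 1 be an odd integer and let N > 2p + 2 be a real number. Then every representation ξ = ε₁a₁ + ⋯ + ε_p a_p with εⱼ ∈ {+1, −1}, aⱼ ∈ A_N, and ξ ∈ I_p has counts satisfying n₁ > n₂ and n₃ < n₄. -/
set_option maxHeartbeats 2000000

theorem counts_strict_inequalities (p : ℕ) (hp1 : 1 < p) (hpodd : Odd p) (N : ℝ) (hN : 2 * (p : ℝ) + 2 < N)
    (ε a : Fin p → ℝ) (hε : ∀ j, ε j = 1 ∨ ε j = -1) (ha : ∀ j, a j ∈ AN p N)
    (hξ : (∑ j, ε j * a j) ∈ Ip p) :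
    {j : Fin p | a j ∈ AtildeN p N ∧ ε j = -1}.ncard < {j : Fin p | a j ∈ AtildeN p N ∧ ε j = 1}.ncard ∧ {j : Fin p | a j ∈ Atilde2N p N ∧ ε j = 1}.ncard < {j : Fin p | a j ∈ Atilde2N p N ∧ ε j = -1}.ncard := by
  classical
  obtain ⟨t, hpt⟩ := hpodd
  have hp3 : 3 ≤ p := by omega
  have hpR : (3:ℝ) ≤ (p:ℝ) := by exact_mod_cast hp3
  have hp0 : (0:ℝ) < (p:ℝ) := by linarith
  have hpne : (p:ℝ) ≠ 0 := ne_of_gt hp0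
  have hp2 : (0:ℝ) < (p:ℝ)^2 := by positivity
  have hN0 : (0:ℝ) < N := by linarith
  have hN8 : (8:ℝ) < N := by linarith
  set ξ := ∑ j, ε j * a j with hxidef
  set lo := 3 * ((p : ℝ) - 1) / (2 * (p : ℝ) ^ 2) with hlodef
  set hi := 3 * ((p : ℝ) + 2) / (2 * (p : ℝ) ^ 2) with hhidef
  set dd := 3 / (p : ℝ) ^ 2 with hdddef
  have hlo0 : 0 ≤ lo := by
    rw [hlodef]; apply div_nonneg (by nlinarith) (by positivity)
  have hhi0 : 0 ≤ hi := by rw [hhidef]; positivity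
  have hdd0 : 0 ≤ dd := by rw [hdddef]; positivity
  have hhi1 : hi ≤ 1 := by
    rw [hhidef, div_le_one (by positivity)]
    nlinarith [mul_nonneg (show (0:ℝ) ≤ (p:ℝ) - 3 by linarith) hp0.le]
  have php : (p:ℝ) * hi ≤ 5/2 := by
    rw [hhidef, show (p:ℝ) * (3*((p:ℝ)+2)/(2*(p:ℝ)^2)) = (3*(p:ℝ)*((p:ℝ)+2))/(2*(p:ℝ)^2) from by ring,
      div_le_iff₀ (by positivity)]
    nlinarith [mul_nonneg (show (0:ℝ) ≤ (p:ℝ) - 3 by linarith) hp0.le]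
  have pdd : (p:ℝ) * dd ≤ 1 := by
    rw [hdddef, show (p:ℝ) * (3/(p:ℝ)^2) = (3*(p:ℝ))/(p:ℝ)^2 from by ring,
      div_le_iff₀ (by positivity)]
    nlinarith [mul_nonneg (show (0:ℝ) ≤ (p:ℝ) - 3 by linarith) hp0.le]
  -- membership characterizations
  have hmemA : ∀ j, a j ∈ AtildeN p N → N + lo ≤ a j ∧ a j ≤ N + hi := by
    intro j h
    simp only [AtildeN, Set.mem_Icc] at h
    constructor
    · rw [hlodef]; exact h.1
    · rw [hhidef]; exact h.2
  have hmemB : ∀ j, a j ∈ Atilde2N p N → 2*N ≤ a j ∧ a j ≤ 2*N + dd := by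
    intro j h
    simp only [Atilde2N, Set.mem_Icc] at h
    exact ⟨h.1, by rw [hdddef]; exact h.2⟩
  have horA : ∀ j, a j ∈ AtildeN p N ∨ a j ∈ Atilde2N p N := by
    intro j
    have := ha j
    rwa [AN, Set.mem_union] at this
  have hdisj : ∀ j, a j ∈ AtildeN p N → a j ∉ Atilde2N p N := by
    intro j h1 h2
    have u := (hmemA j h1).2
    have v := (hmemB j h2).1
    linarith
  have hPA : ∀ j : Fin p, ¬ a j ∈ AtildeN p N ↔ a j ∈ Atilde2N p N :=
    fun j => ⟨fun h => (horA j).resolve_left h, fun h h' => hdisj j h' h⟩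
  have hε1 : ∀ j : Fin p, ¬ ε j = 1 ↔ ε j = -1 :=
    fun j => ⟨fun hn => (hε j).resolve_left hn, fun h' h1 => by rw [h1] at h'; norm_num at h'⟩
  clear_value lo hi dd ξ
  -- the four classes
  set F1 := Finset.univ.filter (fun j : Fin p => a j ∈ AtildeN p N ∧ ε j = 1) with hF1def
  set F2 := Finset.univ.filter (fun j : Fin p => a j ∈ AtildeN p N ∧ ε j = -1) with hF2def
  set F3 := Finset.univ.filter (fun j : Fin p => a j ∈ Atilde2N p N ∧ ε j = 1) with hF3def
  set F4 := Finset.univ.filter (fun j : Fin p => a j ∈ Atilde2N p N ∧ ε j = -1) with hF4def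
  set n1 := F1.card with hn1def
  set n2 := F2.card with hn2def
  set n3 := F3.card with hn3def
  set n4 := F4.card with hn4def
  clear_value F1 F2 F3 F4 n1 n2 n3 n4
  -- goal reduction to cards
  have g1 : {j : Fin p | a j ∈ AtildeN p N ∧ ε j = 1}.ncard = n1 := by
    rw [show {j : Fin p | a j ∈ AtildeN p N ∧ ε j = 1} = (F1 : Set (Fin p)) by
      ext j; simp [hF1def]]
    rw [Set.ncard_coe_finset, ← hn1def]
  have g2 : {j : Fin p | a j ∈ AtildeN p N ∧ ε j = -1}.ncard = n2 := by
    rw [show {j : Fin p | a j ∈ AtildeN p N ∧ ε j = -1} = (F2 : Set (Fin p)) by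
      ext j; simp [hF2def]]
    rw [Set.ncard_coe_finset, ← hn2def]
  have g3 : {j : Fin p | a j ∈ Atilde2N p N ∧ ε j = 1}.ncard = n3 := by
    rw [show {j : Fin p | a j ∈ Atilde2N p N ∧ ε j = 1} = (F3 : Set (Fin p)) by
      ext j; simp [hF3def]]
    rw [Set.ncard_coe_finset, ← hn3def]
  have g4 : {j : Fin p | a j ∈ Atilde2N p N ∧ ε j = -1}.ncard = n4 := by
    rw [show {j : Fin p | a j ∈ Atilde2N p N ∧ ε j = -1} = (F4 : Set (Fin p)) by
      ext j; simp [hF4def]]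
    rw [Set.ncard_coe_finset, ← hn4def]
  rw [g1, g2, g3, g4]
  -- filter identities
  have hF1' : F1 = (Finset.univ.filter (fun j : Fin p => a j ∈ AtildeN p N)).filter
      (fun j => ε j = 1) := by
    rw [hF1def, Finset.filter_filter]
  have hF2' : F2 = (Finset.univ.filter (fun j : Fin p => a j ∈ AtildeN p N)).filter
      (fun j => ¬ ε j = 1) := by
    rw [hF2def, Finset.filter_filter]
    exact Finset.filter_congr fun j _ => by rw [hε1 j]
  have hF3' : F3 = (Finset.univ.filter (fun j : Fin p => a j ∈ Atilde2N p N)).filter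
      (fun j => ε j = 1) := by
    rw [hF3def, Finset.filter_filter]
  have hF4' : F4 = (Finset.univ.filter (fun j : Fin p => a j ∈ Atilde2N p N)).filter
      (fun j => ¬ ε j = 1) := by
    rw [hF4def, Finset.filter_filter]
    exact Finset.filter_congr fun j _ => by rw [hε1 j]
  have hAB : Finset.univ.filter (fun j : Fin p => ¬ a j ∈ AtildeN p N)
      = Finset.univ.filter (fun j : Fin p => a j ∈ Atilde2N p N) :=
    Finset.filter_congr fun j _ => hPA j
  -- counting
  have hc12 : n1 + n2 = (Finset.univ.filter (fun j : Fin p => a j ∈ AtildeN p N)).card := by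
    rw [hn1def, hn2def, hF1', hF2']
    exact Finset.card_filter_add_card_filter_not (fun j => ε j = 1)
  have hc34 : n3 + n4 = (Finset.univ.filter (fun j : Fin p => a j ∈ Atilde2N p N)).card := by
    rw [hn3def, hn4def, hF3', hF4']
    exact Finset.card_filter_add_card_filter_not (fun j => ε j = 1)
  have hcAB : (Finset.univ.filter (fun j : Fin p => a j ∈ AtildeN p N)).card
      + (Finset.univ.filter (fun j : Fin p => a j ∈ Atilde2N p N)).card = p := by
    rw [← hAB]
    rw [Finset.card_filter_add_card_filter_not (fun j : Fin p => a j ∈ AtildeN p N)]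
    simp
  have hcard : n1 + n2 + n3 + n4 = p := by omega
  -- sum splitting
  have hs12 : ∑ j ∈ Finset.univ.filter (fun j : Fin p => a j ∈ AtildeN p N), ε j * a j
      = ∑ j ∈ F1, ε j * a j + ∑ j ∈ F2, ε j * a j := by
    rw [hF1', hF2']
    exact (Finset.sum_filter_add_sum_filter_not _ (fun j => ε j = 1) _).symm
  have hs34 : ∑ j ∈ Finset.univ.filter (fun j : Fin p => a j ∈ Atilde2N p N), ε j * a j
      = ∑ j ∈ F3, ε j * a j + ∑ j ∈ F4, ε j * a j := by
    rw [hF3', hF4']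
    exact (Finset.sum_filter_add_sum_filter_not _ (fun j => ε j = 1) _).symm
  have hsplit : ξ = ∑ j ∈ F1, ε j * a j + ∑ j ∈ F2, ε j * a j
      + ∑ j ∈ F3, ε j * a j + ∑ j ∈ F4, ε j * a j := by
    have h := Finset.sum_filter_add_sum_filter_not Finset.univ
      (fun j : Fin p => a j ∈ AtildeN p N) (fun j => ε j * a j)
    rw [hAB] at h
    rw [hxidef, ← h, hs12, hs34]
    ring
  -- sum bounds
  have b1u : ∑ j ∈ F1, ε j * a j ≤ (n1:ℝ) * (N + hi) := by
    have h := Finset.sum_le_card_nsmul F1 (fun j => ε j * a j) (N + hi) ?_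
    · rw [nsmul_eq_mul] at h; rw [hn1def]; exact h
    · intro j hj
      rw [hF1def, Finset.mem_filter] at hj
      obtain ⟨-, hja, hje⟩ := hj
      simp only [hje, one_mul]; exact (hmemA j hja).2
  have b1l : (n1:ℝ) * (N + lo) ≤ ∑ j ∈ F1, ε j * a j := by
    have h := Finset.card_nsmul_le_sum F1 (fun j => ε j * a j) (N + lo) ?_
    · rw [nsmul_eq_mul] at h; rw [hn1def]; exact h
    · intro j hj
      rw [hF1def, Finset.mem_filter] at hj
      obtain ⟨-, hja, hje⟩ := hj
      simp only [hje, one_mul]; exact (hmemA j hja).1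
  have b2u : ∑ j ∈ F2, ε j * a j ≤ (n2:ℝ) * (-(N + lo)) := by
    have h := Finset.sum_le_card_nsmul F2 (fun j => ε j * a j) (-(N + lo)) ?_
    · rw [nsmul_eq_mul] at h; rw [hn2def]; exact h
    · intro j hj
      rw [hF2def, Finset.mem_filter] at hj
      obtain ⟨-, hja, hje⟩ := hj
      simp only [hje, neg_one_mul]
      have := (hmemA j hja).1; linarith
  have b2l : (n2:ℝ) * (-(N + hi)) ≤ ∑ j ∈ F2, ε j * a j := by
    have h := Finset.card_nsmul_le_sum F2 (fun j => ε j * a j) (-(N + hi)) ?_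
    · rw [nsmul_eq_mul] at h; rw [hn2def]; exact h
    · intro j hj
      rw [hF2def, Finset.mem_filter] at hj
      obtain ⟨-, hja, hje⟩ := hj
      simp only [hje, neg_one_mul]
      have := (hmemA j hja).2; linarith
  have b3u : ∑ j ∈ F3, ε j * a j ≤ (n3:ℝ) * (2*N + dd) := by
    have h := Finset.sum_le_card_nsmul F3 (fun j => ε j * a j) (2*N + dd) ?_
    · rw [nsmul_eq_mul] at h; rw [hn3def]; exact h
    · intro j hj
      rw [hF3def, Finset.mem_filter] at hj
      obtain ⟨-, hja, hje⟩ := hj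
      simp only [hje, one_mul]; exact (hmemB j hja).2
  have b3l : (n3:ℝ) * (2*N) ≤ ∑ j ∈ F3, ε j * a j := by
    have h := Finset.card_nsmul_le_sum F3 (fun j => ε j * a j) (2*N) ?_
    · rw [nsmul_eq_mul] at h; rw [hn3def]; exact h
    · intro j hj
      rw [hF3def, Finset.mem_filter] at hj
      obtain ⟨-, hja, hje⟩ := hj
      simp only [hje, one_mul]; exact (hmemB j hja).1
  have b4u : ∑ j ∈ F4, ε j * a j ≤ (n4:ℝ) * (-(2*N)) := by
    have h := Finset.sum_le_card_nsmul F4 (fun j => ε j * a j) (-(2*N)) ?_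
    · rw [nsmul_eq_mul] at h; rw [hn4def]; exact h
    · intro j hj
      rw [hF4def, Finset.mem_filter] at hj
      obtain ⟨-, hja, hje⟩ := hj
      simp only [hje, neg_one_mul]
      have := (hmemB j hja).1; linarith
  have b4l : (n4:ℝ) * (-(2*N + dd)) ≤ ∑ j ∈ F4, ε j * a j := by
    have h := Finset.card_nsmul_le_sum F4 (fun j => ε j * a j) (-(2*N + dd)) ?_
    · rw [nsmul_eq_mul] at h; rw [hn4def]; exact h
    · intro j hj
      rw [hF4def, Finset.mem_filter] at hj
      obtain ⟨-, hja, hje⟩ := hj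
      simp only [hje, neg_one_mul]
      have := (hmemB j hja).2; linarith
  have hub : ξ ≤ ((n1:ℝ) - n2 + 2*n3 - 2*n4) * N + ((n1:ℝ)*hi - n2*lo + n3*dd) := by
    linarith only [hsplit, b1u, b2u, b3u, b4u]
  have hlb : ((n1:ℝ) - n2 + 2*n3 - 2*n4) * N + ((n1:ℝ)*lo - n2*hi - n4*dd) ≤ ξ := by
    linarith only [hsplit, b1l, b2l, b3l, b4l]
  -- bounds on ξ from Ip
  have hxbounds : 0 < ξ ∧ ξ ≤ 2 := by
    by_cases h3 : p % 3 = 0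
    · rw [Ip, if_pos h3, Set.mem_Icc] at hξ
      have h2p : 2/(p:ℝ) < 1 := by rw [div_lt_one hp0]; linarith
      exact ⟨by linarith [hξ.1], by linarith [hξ.2]⟩
    · by_cases h3' : p % 3 = 1
      · rw [Ip, if_neg h3, if_pos h3', Set.mem_Icc] at hξ
        have hp7 : 7 ≤ p := by omega
        have hp7R : (7:ℝ) ≤ (p:ℝ) := by exact_mod_cast hp7
        have e1 : 3/(p:ℝ) ≤ 3/7 := by
          rw [div_le_div_iff₀ hp0 (by norm_num)]; linarith
        have e2 : 4/(p:ℝ)^2 ≤ 4/49 := by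
          rw [div_le_div_iff₀ hp2 (by norm_num)]; nlinarith
        have e3 : 0 ≤ 2/(p:ℝ) := by positivity
        have e4 : 0 ≤ 8/(p:ℝ)^2 := by positivity
        exact ⟨by linarith [hξ.1], by linarith [hξ.2]⟩
      · rw [Ip, if_neg h3, if_neg h3', Set.mem_Icc] at hξ
        have key : 0 < 1 - 4/(p:ℝ) + 4/(p:ℝ)^2 := by
          have : 1 - 4/(p:ℝ) + 4/(p:ℝ)^2 = ((p:ℝ)-2)^2/(p:ℝ)^2 := by
            field_simp; ring
          rw [this]
          apply div_pos (by nlinarith) hp2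
        have e4 : 0 ≤ 4/(p:ℝ)^2 := by positivity
        exact ⟨by linarith [hξ.1], by linarith [hξ.2]⟩
  obtain ⟨hx0, hx2⟩ := hxbounds
  -- residual bounds
  have hn1p : (n1:ℝ) ≤ (p:ℝ) := by exact_mod_cast (by omega : n1 ≤ p)
  have hn2p : (n2:ℝ) ≤ (p:ℝ) := by exact_mod_cast (by omega : n2 ≤ p)
  have hn3p : (n3:ℝ) ≤ (p:ℝ) := by exact_mod_cast (by omega : n3 ≤ p)
  have hn4p : (n4:ℝ) ≤ (p:ℝ) := by exact_mod_cast (by omega : n4 ≤ p)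
  have hn1r : (0:ℝ) ≤ (n1:ℝ) := Nat.cast_nonneg _
  have hn2r : (0:ℝ) ≤ (n2:ℝ) := Nat.cast_nonneg _
  have hn3r : (0:ℝ) ≤ (n3:ℝ) := Nat.cast_nonneg _
  have hn4r : (0:ℝ) ≤ (n4:ℝ) := Nat.cast_nonneg _
  have hres1 : (n1:ℝ)*hi - n2*lo + n3*dd ≤ 7/2 := by
    linarith only [mul_le_mul_of_nonneg_right hn1p hhi0,
      mul_le_mul_of_nonneg_right hn3p hdd0, mul_nonneg hn2r hlo0, php, pdd]
  have hres2 : (n1:ℝ)*lo - n2*hi - n4*dd ≥ -(7/2) := by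
    linarith only [mul_le_mul_of_nonneg_right hn2p hhi0,
      mul_le_mul_of_nonneg_right hn4p hdd0, mul_nonneg hn1r hlo0, php, pdd]
  -- k = 0
  have hk1 : (n1:ℝ) - n2 + 2*n3 - 2*n4 < 1 := by
    have h : ((n1:ℝ) - n2 + 2*n3 - 2*n4) * N < 1 * N := by
      have h2 : ((n1:ℝ) - n2 + 2*n3 - 2*n4) * N ≤ ξ + 7/2 := by
        linarith only [hlb, hres2]
      linarith only [h2, hx2, hN8]
    exact (mul_lt_mul_iff_of_pos_right hN0).mp h
  have hk2 : (-1:ℝ) < (n1:ℝ) - n2 + 2*n3 - 2*n4 := by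
    have h : (-1:ℝ) * N < ((n1:ℝ) - n2 + 2*n3 - 2*n4) * N := by
      have h2 : ξ - 7/2 ≤ ((n1:ℝ) - n2 + 2*n3 - 2*n4) * N := by
        linarith only [hub, hres1]
      linarith only [h2, hx0, hN8]
    exact (mul_lt_mul_iff_of_pos_right hN0).mp h
  have hKint : (n1:ℤ) - n2 + 2*n3 - 2*n4 = 0 := by
    have h1 : (((n1:ℤ) - n2 + 2*n3 - 2*n4 : ℤ) : ℝ) < 1 := by push_cast; linarith
    have h2 : (-1:ℝ) < (((n1:ℤ) - n2 + 2*n3 - 2*n4 : ℤ) : ℝ) := by push_cast; linarith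
    have h1' : ((n1:ℤ) - n2 + 2*n3 - 2*n4 : ℤ) < 1 := by exact_mod_cast h1
    have h2' : (-1:ℤ) < ((n1:ℤ) - n2 + 2*n3 - 2*n4 : ℤ) := by exact_mod_cast h2
    omega
  -- main strict inequality: n3 < n4
  have h34 : n3 < n4 := by
    by_contra hcon
    push_neg at hcon
    obtain ⟨q, hq1, hq2, hq3, hq4⟩ : ∃ q : ℕ, 1 ≤ q ∧ n3 = n4 + q ∧ n2 = n1 + 2*q ∧
        2*n1 + 3*q + 2*n4 = p := ⟨n3 - n4, by omega, by omega, by omega, by omega⟩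
    have rq1 : (1:ℝ) ≤ (q:ℝ) := by exact_mod_cast hq1
    have rq2 : (n3:ℝ) = (n4:ℝ) + q := by exact_mod_cast hq2
    have rq3 : (n2:ℝ) = (n1:ℝ) + 2*q := by exact_mod_cast hq3
    have rq4 : 2*(n1:ℝ) + 3*(q:ℝ) + 2*(n4:ℝ) = (p:ℝ) := by exact_mod_cast hq4
    have hZ : (n1:ℝ)*(3*((p:ℝ)+2)) - (n2:ℝ)*(3*((p:ℝ)-1)) + (n3:ℝ)*6 ≤ 0 := by
      rw [rq2, rq3, ← rq4]
      nlinarith only [rq1, hn1r, hn4r,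
        mul_nonneg (show (0:ℝ) ≤ (q:ℝ)-1 by linarith only [rq1]) hn1r,
        mul_nonneg (show (0:ℝ) ≤ (q:ℝ)-1 by linarith only [rq1]) hn4r,
        mul_nonneg (show (0:ℝ) ≤ (q:ℝ)-1 by linarith only [rq1])
          (show (0:ℝ) ≤ (q:ℝ) by linarith only [rq1])]
    have hid : ((n1:ℝ)*hi - n2*lo + n3*dd) * (2*(p:ℝ)^2)
        = (n1:ℝ)*(3*((p:ℝ)+2)) - (n2:ℝ)*(3*((p:ℝ)-1)) + (n3:ℝ)*6 := by
      rw [hhidef, hlodef, hdddef]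
      field_simp
      ring
    have hfin : (n1:ℝ)*hi - n2*lo + n3*dd ≤ 0 := by nlinarith only [hid, hZ, hp2]
    have hK0 : (n1:ℝ) - n2 + 2*n3 - 2*n4 = 0 := by exact_mod_cast hKint
    rw [hK0, zero_mul, zero_add] at hub
    linarith only [hub, hfin, hx0]
  have h12 : n2 < n1 := by omega
  exact ⟨h12, h34⟩
end

section
/- Let p > 1 be an odd integer and let N > 2p + 2 be a real number. Then every representation ξ = ε₁a₁ + ⋯ + ε_p a_p with εⱼ ∈ {+1, −1}, aⱼ ∈ A_N, and ξ ∈ I_p has counts satisfying n₂ + n₃ ≤ 2. -/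
set_option maxHeartbeats 1000000 in
theorem counts_n2_add_n3_le_two (p : ℕ) (hp1 : 1 < p) (hpodd : Odd p) (N : ℝ) (hN : 2 * (p : ℝ) + 2 < N)
    (ε a : Fin p → ℝ) (hε : ∀ j, ε j = 1 ∨ ε j = -1) (ha : ∀ j, a j ∈ AN p N)
    (hξ : (∑ j, ε j * a j) ∈ Ip p) :
    {j : Fin p | a j ∈ AtildeN p N ∧ ε j = -1}.ncard + {j : Fin p | a j ∈ Atilde2N p N ∧ ε j = 1}.ncard ≤ 2 := by
  classical
  have hp2 : p % 2 = 1 := Nat.odd_iff.mp hpodd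
  have hp3 : 3 ≤ p := by omega
  have hpR : (3:ℝ) ≤ (p:ℝ) := by exact_mod_cast hp3
  have hp0 : (0:ℝ) < (p:ℝ) := by linarith
  have hN8 : (8:ℝ) < N := by linarith
  have hN0 : (0:ℝ) ≤ N := by linarith
  -- abbreviations
  obtain ⟨U, hUdef⟩ : ∃ U : ℝ, U = 3 * ((p:ℝ) + 2) / (2 * (p:ℝ) ^ 2) := ⟨_, rfl⟩
  obtain ⟨L, hLdef⟩ : ∃ L : ℝ, L = 3 * ((p:ℝ) - 1) / (2 * (p:ℝ) ^ 2) := ⟨_, rfl⟩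
  obtain ⟨T, hTdef⟩ : ∃ T : ℝ, T = 3 / (p:ℝ) ^ 2 := ⟨_, rfl⟩
  have hU0 : 0 ≤ U := by rw [hUdef]; positivity
  have hL0 : 0 ≤ L := by rw [hLdef]; apply div_nonneg; nlinarith; positivity
  have hT0 : 0 ≤ T := by rw [hTdef]; positivity
  have hTU : T ≤ U := by
    rw [hTdef, hUdef, div_le_div_iff₀ (by positivity) (by positivity)]; nlinarith
  have hpU : (p:ℝ) * U ≤ 5/2 := by
    rw [hUdef, ← mul_div_assoc, div_le_iff₀ (by positivity)]; nlinarith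
  -- the sum
  set xi := ∑ j, ε j * a j with hxidef
  -- crude bounds on xi
  have hxib : xi ≤ 2 ∧ -2 ≤ xi := by
    have h2p : (2:ℝ)/(p:ℝ) ≤ 1 := by rw [div_le_one hp0]; linarith
    have h3p : (3:ℝ)/(p:ℝ) ≤ 1 := by rw [div_le_one hp0]; linarith
    have h4p : (4:ℝ)/(p:ℝ) ≤ 2 := by rw [div_le_iff₀ hp0]; linarith
    have h4p2 : (4:ℝ)/(p:ℝ)^2 ≤ 1 := by rw [div_le_one (by positivity)]; nlinarith
    have h8p2 : (0:ℝ) ≤ 8/(p:ℝ)^2 := by positivity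
    have h4p2' : (0:ℝ) ≤ 4/(p:ℝ)^2 := by positivity
    have h2p' : (0:ℝ) ≤ 2/(p:ℝ) := by positivity
    have hmem := hξ
    unfold Ip at hmem
    split_ifs at hmem with h1 h2 <;> rw [Set.mem_Icc] at hmem <;>
      exact ⟨by linarith [hmem.1, hmem.2], by linarith [hmem.1, hmem.2]⟩
  -- the four classes
  set s1 := Finset.univ.filter (fun j => a j ∈ AtildeN p N ∧ ε j = 1) with hs1def
  set s2 := Finset.univ.filter (fun j => a j ∈ AtildeN p N ∧ ε j = -1) with hs2def
  set s3 := Finset.univ.filter (fun j => a j ∈ Atilde2N p N ∧ ε j = 1) with hs3def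
  set s4 := Finset.univ.filter (fun j => a j ∈ Atilde2N p N ∧ ε j = -1) with hs4def
  have hm1 : ∀ j, j ∈ s1 ↔ (a j ∈ AtildeN p N ∧ ε j = 1) := fun j => by
    rw [hs1def]; simp
  have hm2 : ∀ j, j ∈ s2 ↔ (a j ∈ AtildeN p N ∧ ε j = -1) := fun j => by
    rw [hs2def]; simp
  have hm3 : ∀ j, j ∈ s3 ↔ (a j ∈ Atilde2N p N ∧ ε j = 1) := fun j => by
    rw [hs3def]; simp
  have hm4 : ∀ j, j ∈ s4 ↔ (a j ∈ Atilde2N p N ∧ ε j = -1) := fun j => by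
    rw [hs4def]; simp
  -- the two intervals are disjoint
  have hANdisj : ∀ j, a j ∈ AtildeN p N → a j ∈ Atilde2N p N → False := by
    intro j h1 h2
    simp only [AtildeN, Set.mem_Icc] at h1
    simp only [Atilde2N, Set.mem_Icc] at h2
    have hsmall : 3 * ((p:ℝ) + 2) / (2 * (p:ℝ) ^ 2) ≤ 1 := by
      rw [div_le_one (by positivity)]; nlinarith
    linarith [h1.2, h2.1]
  have hsign : ∀ j, ε j = 1 → ε j = -1 → False := by
    intro j e1 e2; rw [e1] at e2; norm_num at e2
  -- disjointness
  have hd12 : Disjoint s1 s2 := Finset.disjoint_left.mpr (fun j h1 h2 =>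
    hsign j ((hm1 j).mp h1).2 ((hm2 j).mp h2).2)
  have hd13 : Disjoint s1 s3 := Finset.disjoint_left.mpr (fun j h1 h2 =>
    hANdisj j ((hm1 j).mp h1).1 ((hm3 j).mp h2).1)
  have hd14 : Disjoint s1 s4 := Finset.disjoint_left.mpr (fun j h1 h2 =>
    hANdisj j ((hm1 j).mp h1).1 ((hm4 j).mp h2).1)
  have hd23 : Disjoint s2 s3 := Finset.disjoint_left.mpr (fun j h1 h2 =>
    hANdisj j ((hm2 j).mp h1).1 ((hm3 j).mp h2).1)
  have hd24 : Disjoint s2 s4 := Finset.disjoint_left.mpr (fun j h1 h2 =>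
    hANdisj j ((hm2 j).mp h1).1 ((hm4 j).mp h2).1)
  have hd34 : Disjoint s3 s4 := Finset.disjoint_left.mpr (fun j h1 h2 =>
    hsign j ((hm3 j).mp h1).2 ((hm4 j).mp h2).2)
  have hd12_3 : Disjoint (s1 ∪ s2) s3 := Finset.disjoint_union_left.mpr ⟨hd13, hd23⟩
  have hd123_4 : Disjoint (s1 ∪ s2 ∪ s3) s4 :=
    Finset.disjoint_union_left.mpr ⟨Finset.disjoint_union_left.mpr ⟨hd14, hd24⟩, hd34⟩
  -- union is everything
  have hU4 : s1 ∪ s2 ∪ s3 ∪ s4 = Finset.univ := by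
    apply Finset.eq_univ_iff_forall.mpr
    intro j
    simp only [Finset.mem_union, hm1 j, hm2 j, hm3 j, hm4 j]
    rcases ha j with hA | hA <;> rcases hε j with hE | hE
    · exact Or.inl (Or.inl (Or.inl ⟨hA, hE⟩))
    · exact Or.inl (Or.inl (Or.inr ⟨hA, hE⟩))
    · exact Or.inl (Or.inr ⟨hA, hE⟩)
    · exact Or.inr ⟨hA, hE⟩
  -- cardinalities
  set m1 := ((s1.card : ℝ)) with hm1def
  set m2 := ((s2.card : ℝ)) with hm2def
  set m3 := ((s3.card : ℝ)) with hm3def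
  set m4 := ((s4.card : ℝ)) with hm4def
  have hm1n : 0 ≤ m1 := by positivity
  have hm2n : 0 ≤ m2 := by positivity
  have hm3n : 0 ≤ m3 := by positivity
  have hm4n : 0 ≤ m4 := by positivity
  have hcardn : s1.card + s2.card + s3.card + s4.card = p := by
    have h := congrArg Finset.card hU4
    rw [Finset.card_union_of_disjoint hd123_4, Finset.card_union_of_disjoint hd12_3,
      Finset.card_union_of_disjoint hd12, Finset.card_univ, Fintype.card_fin] at h
    exact h
  have hcardR : m1 + m2 + m3 + m4 = (p:ℝ) := by
    rw [hm1def, hm2def, hm3def, hm4def]; exact_mod_cast hcardn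
  -- sum decomposition
  have hsplit : xi = (∑ j ∈ s1, ε j * a j) + (∑ j ∈ s2, ε j * a j)
      + (∑ j ∈ s3, ε j * a j) + (∑ j ∈ s4, ε j * a j) := by
    rw [hxidef, ← hU4, Finset.sum_union hd123_4, Finset.sum_union hd12_3,
      Finset.sum_union hd12]
  -- partial sum bounds
  have hb1u : (∑ j ∈ s1, ε j * a j) ≤ m1 * (N + U) := by
    rw [hm1def, ← nsmul_eq_mul]
    refine Finset.sum_le_card_nsmul s1 _ _ ?_
    intro j hj
    obtain ⟨hA, hE⟩ := (hm1 j).mp hj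
    simp only [AtildeN, Set.mem_Icc] at hA
    simp only [hE, one_mul, hUdef]
    exact hA.2
  have hb1l : m1 * (N + L) ≤ (∑ j ∈ s1, ε j * a j) := by
    rw [hm1def, ← nsmul_eq_mul]
    refine Finset.card_nsmul_le_sum s1 _ _ ?_
    intro j hj
    obtain ⟨hA, hE⟩ := (hm1 j).mp hj
    simp only [AtildeN, Set.mem_Icc] at hA
    simp only [hE, one_mul, hLdef]
    exact hA.1
  have hb2u : (∑ j ∈ s2, ε j * a j) ≤ m2 * (-(N + L)) := by
    rw [hm2def, ← nsmul_eq_mul]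
    refine Finset.sum_le_card_nsmul s2 _ _ ?_
    intro j hj
    obtain ⟨hA, hE⟩ := (hm2 j).mp hj
    simp only [AtildeN, Set.mem_Icc] at hA
    simp only [hE, neg_one_mul, hLdef]
    linarith only [hA.1]
  have hb2l : m2 * (-(N + U)) ≤ (∑ j ∈ s2, ε j * a j) := by
    rw [hm2def, ← nsmul_eq_mul]
    refine Finset.card_nsmul_le_sum s2 _ _ ?_
    intro j hj
    obtain ⟨hA, hE⟩ := (hm2 j).mp hj
    simp only [AtildeN, Set.mem_Icc] at hA
    simp only [hE, neg_one_mul, hUdef]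
    linarith only [hA.2]
  have hb3u : (∑ j ∈ s3, ε j * a j) ≤ m3 * (2 * N + T) := by
    rw [hm3def, ← nsmul_eq_mul]
    refine Finset.sum_le_card_nsmul s3 _ _ ?_
    intro j hj
    obtain ⟨hA, hE⟩ := (hm3 j).mp hj
    simp only [Atilde2N, Set.mem_Icc] at hA
    simp only [hE, one_mul, hTdef]
    exact hA.2
  have hb3l : m3 * (2 * N) ≤ (∑ j ∈ s3, ε j * a j) := by
    rw [hm3def, ← nsmul_eq_mul]
    refine Finset.card_nsmul_le_sum s3 _ _ ?_
    intro j hj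
    obtain ⟨hA, hE⟩ := (hm3 j).mp hj
    simp only [Atilde2N, Set.mem_Icc] at hA
    simp only [hE, one_mul]
    exact hA.1
  have hb4u : (∑ j ∈ s4, ε j * a j) ≤ m4 * (-(2 * N)) := by
    rw [hm4def, ← nsmul_eq_mul]
    refine Finset.sum_le_card_nsmul s4 _ _ ?_
    intro j hj
    obtain ⟨hA, hE⟩ := (hm4 j).mp hj
    simp only [Atilde2N, Set.mem_Icc] at hA
    simp only [hE, neg_one_mul]
    linarith only [hA.1]
  have hb4l : m4 * (-(2 * N + T)) ≤ (∑ j ∈ s4, ε j * a j) := by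
    rw [hm4def, ← nsmul_eq_mul]
    refine Finset.card_nsmul_le_sum s4 _ _ ?_
    intro j hj
    obtain ⟨hA, hE⟩ := (hm4 j).mp hj
    simp only [Atilde2N, Set.mem_Icc] at hA
    simp only [hE, neg_one_mul, hTdef]
    linarith only [hA.2]
  have hup : xi ≤ m1 * (N + U) + m2 * (-(N + L)) + m3 * (2 * N + T) + m4 * (-(2 * N)) := by
    rw [hsplit]; linarith only [hb1u, hb2u, hb3u, hb4u]
  have hlo : m1 * (N + L) + m2 * (-(N + U)) + m3 * (2 * N) + m4 * (-(2 * N + T)) ≤ xi := by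
    rw [hsplit]; linarith only [hb1l, hb2l, hb3l, hb4l]
  -- useful product facts
  have e1 : 0 ≤ ((p:ℝ) - m1 - m3) * U := mul_nonneg (by linarith) hU0
  have e2 : 0 ≤ m3 * (U - T) := mul_nonneg hm3n (by linarith)
  have e3 : 0 ≤ m2 * L := mul_nonneg hm2n hL0
  have e4 : 0 ≤ ((p:ℝ) - m2 - m4) * U := mul_nonneg (by linarith) hU0
  have e5 : 0 ≤ m4 * (U - T) := mul_nonneg hm4n (by linarith)
  have e6 : 0 ≤ m1 * L := mul_nonneg hm1n hL0
  -- the N-coefficient vanishes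
  have hE1 : m1 - m2 + 2 * m3 - 2 * m4 = 0 := by
    by_contra hco
    have hMR : ((((s1.card : ℤ) - s2.card + 2 * s3.card - 2 * s4.card) : ℤ) : ℝ)
        = m1 - m2 + 2 * m3 - 2 * m4 := by
      rw [hm1def, hm2def, hm3def, hm4def]; push_cast; ring
    have hMne : ((s1.card : ℤ) - s2.card + 2 * s3.card - 2 * s4.card) ≠ 0 := by
      intro h; apply hco; rw [← hMR, h]; norm_num
    have h1M : (1:ℝ) ≤ |m1 - m2 + 2 * m3 - 2 * m4| := by
      rw [← hMR, ← Int.cast_abs]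
      exact_mod_cast Int.one_le_abs hMne
    have hexpu : m1 * (N + U) + m2 * (-(N + L)) + m3 * (2 * N + T) + m4 * (-(2 * N))
        = (m1 - m2 + 2 * m3 - 2 * m4) * N + (m1 * U - m2 * L + m3 * T) := by ring
    have hexpl : m1 * (N + L) + m2 * (-(N + U)) + m3 * (2 * N) + m4 * (-(2 * N + T))
        = (m1 - m2 + 2 * m3 - 2 * m4) * N + (m1 * L - m2 * U - m4 * T) := by ring
    have hcu : (m1 - m2 + 2 * m3 - 2 * m4) * N ≤ 9/2 := by
      rw [hexpl] at hlo
      linarith only [hlo, hxib.1, e4, e5, e6, hpU]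
    have hcl : -(9/2) ≤ (m1 - m2 + 2 * m3 - 2 * m4) * N := by
      rw [hexpu] at hup
      linarith only [hup, hxib.2, e1, e2, e3, hpU]
    have habs : |(m1 - m2 + 2 * m3 - 2 * m4) * N| ≤ 9/2 := abs_le.mpr ⟨hcl, hcu⟩
    rw [abs_mul, abs_of_nonneg hN0] at habs
    linarith only [habs, hN8,
      mul_nonneg (show (0:ℝ) ≤ |m1 - m2 + 2 * m3 - 2 * m4| - 1 by linarith only [h1M]) hN0]
  -- refined upper bound (N part cancels)
  have hU3 : xi ≤ m1 * U - m2 * L + m3 * T := by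
    have hexpu : m1 * (N + U) + m2 * (-(N + L)) + m3 * (2 * N + T) + m4 * (-(2 * N))
        = (m1 - m2 + 2 * m3 - 2 * m4) * N + (m1 * U - m2 * L + m3 * T) := by ring
    rw [hexpu, hE1, zero_mul, zero_add] at hup
    exact hup
  have hE3 : 3 * m1 + m2 + 4 * m3 = 2 * (p:ℝ) := by linarith
  have hmulU : (m1 * U - m2 * L + m3 * T) * (2 * (p:ℝ) ^ 2)
      = 3 * m1 * ((p:ℝ) + 2) - 3 * m2 * ((p:ℝ) - 1) + 6 * m3 := by
    rw [hUdef, hLdef, hTdef]; field_simp; ring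
  have hq : xi * (2 * (p:ℝ) ^ 2)
      ≤ 2 * (p:ℝ) ^ 2 + 4 * (p:ℝ) - (4 * (p:ℝ) - 1) * m2 - (4 * (p:ℝ) + 2) * m3 := by
    have h1 : xi * (2 * (p:ℝ) ^ 2) ≤ (m1 * U - m2 * L + m3 * T) * (2 * (p:ℝ) ^ 2) :=
      mul_le_mul_of_nonneg_right hU3 (by positivity)
    rw [hmulU] at h1
    have h6 : 3 * m1 = 2 * (p:ℝ) - m2 - 4 * m3 := by linarith
    have h7 : 3 * m1 * ((p:ℝ) + 2) = (2 * (p:ℝ) - m2 - 4 * m3) * ((p:ℝ) + 2) := by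
      rw [h6]
    linarith only [h1, h7]
  -- rewrite the goal
  have hset2 : {j : Fin p | a j ∈ AtildeN p N ∧ ε j = -1} = (↑s2 : Set (Fin p)) := by
    ext j; simp [hm2 j]
  have hset3 : {j : Fin p | a j ∈ Atilde2N p N ∧ ε j = 1} = (↑s3 : Set (Fin p)) := by
    ext j; simp [hm3 j]
  rw [hset2, hset3, Set.ncard_coe_finset, Set.ncard_coe_finset]
  by_contra hcon
  push_neg at hcon
  have hK : (3:ℝ) ≤ m2 + m3 := by
    rw [hm2def, hm3def]
    have : 3 ≤ s2.card + s3.card := by omega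
    exact_mod_cast this
  have hprod : 0 ≤ (4 * (p:ℝ) - 1) * (m2 + m3 - 3) :=
    mul_nonneg (by linarith) (by linarith)
  -- case split on p % 3
  have hmem := hξ
  unfold Ip at hmem
  split_ifs at hmem with h1 h2 <;> rw [Set.mem_Icc] at hmem
  · -- p ≡ 0 mod 3
    have hl := hmem.1
    have hcalc : (1 - 2/(p:ℝ)) * (2 * (p:ℝ) ^ 2) = 2 * (p:ℝ) ^ 2 - 4 * (p:ℝ) := by
      field_simp; ring
    have h2' : (1 - 2/(p:ℝ)) * (2 * (p:ℝ) ^ 2) ≤ xi * (2 * (p:ℝ) ^ 2) :=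
      mul_le_mul_of_nonneg_right hl (by positivity)
    rw [hcalc] at h2'
    linarith only [hq, h2', hprod, hm3n, hpR]
  · -- p ≡ 1 mod 3
    have hp7 : 7 ≤ p := by omega
    have hp7R : (7:ℝ) ≤ (p:ℝ) := by exact_mod_cast hp7
    have hl := hmem.1
    have hcalc : (1 - 3/(p:ℝ) - 4/(p:ℝ)^2) * (2 * (p:ℝ) ^ 2)
        = 2 * (p:ℝ) ^ 2 - 6 * (p:ℝ) - 8 := by
      field_simp; ring
    have h2' : (1 - 3/(p:ℝ) - 4/(p:ℝ)^2) * (2 * (p:ℝ) ^ 2) ≤ xi * (2 * (p:ℝ) ^ 2) :=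
      mul_le_mul_of_nonneg_right hl (by positivity)
    rw [hcalc] at h2'
    linarith only [hq, h2', hprod, hm3n, hp7R]
  · -- p ≡ 2 mod 3
    have hl := hmem.1
    have hcalc : (1 - 4/(p:ℝ) + 4/(p:ℝ)^2) * (2 * (p:ℝ) ^ 2)
        = 2 * (p:ℝ) ^ 2 - 8 * (p:ℝ) + 8 := by
      field_simp; ring
    have h2' : (1 - 4/(p:ℝ) + 4/(p:ℝ)^2) * (2 * (p:ℝ) ^ 2) ≤ xi * (2 * (p:ℝ) ^ 2) :=
      mul_le_mul_of_nonneg_right hl (by positivity)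
    rw [hcalc] at h2'
    linarith only [hq, h2', hprod, hm3n, hpR]
end

section
/- Let p > 1 be an odd integer and N ≥ 1 a real number. Then for every ξ ∈ I_p there exist signs ε₁, …, ε_p ∈ {+1, −1} and points a₁, …, a_p ∈ A_N such that ξ = ε₁a₁ + ⋯ + ε_p a_p. -/
lemma sum_piece (p a b m : ℕ) (hsum : a + b + m = p) (P Q R : ℝ) :
    ∑ j : Fin p, (if (j : ℕ) < a then P else if (j : ℕ) < a + b then Q else R)
      = a * P + b * Q + m * R := by
  rw [Fin.sum_univ_eq_sum_range (fun j => if j < a then P else if j < a + b then Q else R) p]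
  rw [Finset.range_eq_Ico,
    ← Finset.sum_Ico_consecutive _ (Nat.zero_le (a + b)) (by omega : a + b ≤ p),
    ← Finset.sum_Ico_consecutive _ (Nat.zero_le a) (by omega : a ≤ a + b)]
  have h1 : ∀ j ∈ Finset.Ico 0 a,
      (if j < a then P else if j < a + b then Q else R) = P := by
    intro j hj; simp only [Finset.mem_Ico] at hj; rw [if_pos hj.2]
  have h2 : ∀ j ∈ Finset.Ico a (a + b),
      (if j < a then P else if j < a + b then Q else R) = Q := by
    intro j hj; simp only [Finset.mem_Ico] at hj
    rw [if_neg (by omega), if_pos hj.2]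
  have h3 : ∀ j ∈ Finset.Ico (a + b) p,
      (if j < a then P else if j < a + b then Q else R) = R := by
    intro j hj; simp only [Finset.mem_Ico] at hj
    rw [if_neg (by omega), if_neg (by omega)]
  rw [Finset.sum_congr rfl h1, Finset.sum_congr rfl h2, Finset.sum_congr rfl h3,
    Finset.sum_const, Finset.sum_const, Finset.sum_const,
    Nat.card_Ico, Nat.card_Ico, Nat.card_Ico]
  have e1 : a - 0 = a := by omega
  have e2 : a + b - a = b := by omega
  have e3 : p - (a + b) = m := by omega
  rw [e1, e2, e3, nsmul_eq_mul, nsmul_eq_mul, nsmul_eq_mul]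

lemma key (p a b m : ℕ) (N ξ : ℝ) (hN : 1 ≤ N) (hp : 0 < p)
    (hsum : a + b + m = p) (hbal : a = b + 2 * m)
    (hlo : (a : ℝ) * (3 * ((p : ℝ) - 1) / (2 * (p : ℝ) ^ 2))
        - (b : ℝ) * (3 * ((p : ℝ) + 2) / (2 * (p : ℝ) ^ 2))
        - (m : ℝ) * (3 / (p : ℝ) ^ 2) ≤ ξ)
    (hhi : ξ ≤ (a : ℝ) * (3 * ((p : ℝ) + 2) / (2 * (p : ℝ) ^ 2))
        - (b : ℝ) * (3 * ((p : ℝ) - 1) / (2 * (p : ℝ) ^ 2))) :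
    ∃ ε aa : Fin p → ℝ,
      (∀ j, ε j = 1 ∨ ε j = -1) ∧ (∀ j, aa j ∈ AN p N) ∧ ξ = ∑ j, ε j * aa j := by
  have hpr : (0 : ℝ) < (p : ℝ) := by exact_mod_cast hp
  set c0 : ℝ := 3 * ((p : ℝ) - 1) / (2 * (p : ℝ) ^ 2) with hc0
  set d0 : ℝ := 3 * ((p : ℝ) + 2) / (2 * (p : ℝ) ^ 2) with hd0
  set s : ℝ := 3 / (p : ℝ) ^ 2 with hs
  have hw : d0 - c0 = 9 / (2 * (p : ℝ) ^ 2) := by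
    rw [hc0, hd0]; field_simp; ring
  have hwpos : (0 : ℝ) < d0 - c0 := by rw [hw]; positivity
  have hspos : (0 : ℝ) < s := by rw [hs]; positivity
  have hA : (a : ℝ) = (b : ℝ) + 2 * (m : ℝ) := by exact_mod_cast hbal
  have hD : (0 : ℝ) < ((a : ℝ) + (b : ℝ)) * (d0 - c0) + (m : ℝ) * s := by
    rcases Nat.eq_zero_or_pos m with hm | hm
    · have hab : 0 < a + b := by omega
      have habr : (0 : ℝ) < (a : ℝ) + (b : ℝ) := by exact_mod_cast hab
      have := mul_pos habr hwpos
      simp [hm]; linarith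
    · have hmr : (0 : ℝ) < (m : ℝ) := by exact_mod_cast hm
      have h1 : (0 : ℝ) ≤ ((a : ℝ) + (b : ℝ)) * (d0 - c0) :=
        mul_nonneg (by positivity) hwpos.le
      nlinarith
  set t : ℝ := (ξ - ((a : ℝ) * c0 - (b : ℝ) * d0 - (m : ℝ) * s)) /
      (((a : ℝ) + (b : ℝ)) * (d0 - c0) + (m : ℝ) * s) with ht
  have htD : t * (((a : ℝ) + (b : ℝ)) * (d0 - c0) + (m : ℝ) * s)
      = ξ - ((a : ℝ) * c0 - (b : ℝ) * d0 - (m : ℝ) * s) := by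
    rw [ht]; field_simp
  have ht0 : 0 ≤ t := by
    apply div_nonneg _ hD.le
    linarith
  have ht1 : t ≤ 1 := by
    rw [ht, div_le_one hD]
    nlinarith [hhi]
  have hm1 : 0 ≤ t * (d0 - c0) := mul_nonneg ht0 hwpos.le
  have hm2 : t * (d0 - c0) ≤ d0 - c0 := by
    calc t * (d0 - c0) ≤ 1 * (d0 - c0) := mul_le_mul_of_nonneg_right ht1 hwpos.le
    _ = d0 - c0 := one_mul _
  have hm3 : 0 ≤ (1 - t) * s := mul_nonneg (by linarith) hspos.le
  have hm4 : (1 - t) * s ≤ s := by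
    calc (1 - t) * s ≤ 1 * s := mul_le_mul_of_nonneg_right (by linarith) hspos.le
    _ = s := one_mul _
  refine ⟨fun j => if (j : ℕ) < a then 1 else -1,
    fun j => if (j : ℕ) < a then N + c0 + t * (d0 - c0)
      else if (j : ℕ) < a + b then N + d0 - t * (d0 - c0)
      else 2 * N + (1 - t) * s, ?_, ?_, ?_⟩
  · intro j; by_cases h : (j : ℕ) < a <;> simp [h]
  · intro j
    simp only [AN, AtildeN, Atilde2N, Set.mem_union, Set.mem_Icc, ← hc0, ← hd0, ← hs]
    by_cases h1 : (j : ℕ) < a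
    · rw [if_pos h1]
      left
      exact ⟨by linarith, by linarith⟩
    · rw [if_neg h1]
      by_cases h2 : (j : ℕ) < a + b
      · rw [if_pos h2]
        left
        exact ⟨by linarith, by linarith⟩
      · rw [if_neg h2]
        right
        exact ⟨by linarith, by linarith⟩
  · have hsump := sum_piece p a b m hsum (N + c0 + t * (d0 - c0))
      (-(N + d0 - t * (d0 - c0))) (-(2 * N + (1 - t) * s))
    have heq : ∀ j : Fin p,
        (if (j : ℕ) < a then (1 : ℝ) else -1) *
          (if (j : ℕ) < a then N + c0 + t * (d0 - c0)
            else if (j : ℕ) < a + b then N + d0 - t * (d0 - c0)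
            else 2 * N + (1 - t) * s)
        = (if (j : ℕ) < a then N + c0 + t * (d0 - c0)
            else if (j : ℕ) < a + b then -(N + d0 - t * (d0 - c0))
            else -(2 * N + (1 - t) * s)) := by
      intro j
      by_cases h1 : (j : ℕ) < a
      · simp [h1]
      · by_cases h2 : (j : ℕ) < a + b <;> simp [h1, h2]
    rw [Finset.sum_congr rfl (fun j _ => heq j), hsump]
    linear_combination (-1 : ℝ) * htD - N * hA

theorem existence_of_representation (p : ℕ) (hp1 : 1 < p) (hpodd : Odd p) (N : ℝ)
    (hN : 1 ≤ N) :
    ∀ ξ ∈ Ip p, ∃ ε a : Fin p → ℝ,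
      (∀ j, ε j = 1 ∨ ε j = -1) ∧ (∀ j, a j ∈ AN p N) ∧ ξ = ∑ j, ε j * a j := by
  have hodd : p % 2 = 1 := Nat.odd_iff.mp hpodd
  have hp0 : 0 < p := by omega
  have hpr : (0 : ℝ) < (p : ℝ) := by exact_mod_cast hp0
  intro ξ hξ
  have hlt : p % 3 = 0 ∨ p % 3 = 1 ∨ p % 3 = 2 := by omega
  rcases hlt with h3 | h3 | h3
  · -- p ≡ 0 mod 3
    rw [Ip, if_pos h3] at hξ
    obtain ⟨hξ1, hξ2⟩ := hξ
    set q := p / 3 with hqdef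
    have hq : p = 3 * q := by omega
    have hq1 : 1 ≤ q := by omega
    have hpq : (p : ℝ) = 3 * (q : ℝ) := by exact_mod_cast hq
    have hqr : (0 : ℝ) < (q : ℝ) := by exact_mod_cast hq1
    refine key p (2 * q) 0 q N ξ hN hp0 (by omega) (by omega) ?_ ?_
    · push_cast
      have e : 2 * (q : ℝ) * (3 * ((p : ℝ) - 1) / (2 * (p : ℝ) ^ 2))
          - 0 * (3 * ((p : ℝ) + 2) / (2 * (p : ℝ) ^ 2))
          - (q : ℝ) * (3 / (p : ℝ) ^ 2) = 1 - 2 / (p : ℝ) := by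
        rw [hpq]; field_simp; ring
      refine le_trans (le_of_eq e) ?_
      ring_nf at hξ1 ⊢
      linarith
    · push_cast
      have e : 2 * (q : ℝ) * (3 * ((p : ℝ) + 2) / (2 * (p : ℝ) ^ 2))
          - 0 * (3 * ((p : ℝ) - 1) / (2 * (p : ℝ) ^ 2)) = 1 + 2 / (p : ℝ) := by
        rw [hpq]; field_simp; ring
      refine le_trans ?_ (le_of_eq e.symm)
      ring_nf at hξ2 ⊢
      linarith
  · -- p ≡ 1 mod 3
    rw [Ip, if_neg (by omega), if_pos h3] at hξ
    obtain ⟨hξ1, hξ2⟩ := hξ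
    set q := p / 3 with hqdef
    have hq : p = 3 * q + 1 := by omega
    have hq2 : 2 ≤ q := by omega
    have hpq : (p : ℝ) = 3 * (q : ℝ) + 1 := by exact_mod_cast hq
    have hqr : (2 : ℝ) ≤ (q : ℝ) := by exact_mod_cast hq2
    refine key p (2 * q) 2 (q - 1) N ξ hN hp0 (by omega) (by omega) ?_ ?_
    · push_cast [Nat.cast_sub (by omega : 1 ≤ q)]
      have e : 2 * (q : ℝ) * (3 * ((p : ℝ) - 1) / (2 * (p : ℝ) ^ 2))
          - 2 * (3 * ((p : ℝ) + 2) / (2 * (p : ℝ) ^ 2))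
          - ((q : ℝ) - 1) * (3 / (p : ℝ) ^ 2) = 1 - 6 / (p : ℝ) - 1 / (p : ℝ) ^ 2 := by
        rw [hpq]; field_simp; ring
      have hple : 3 / (p : ℝ) ^ 2 ≤ 3 / (p : ℝ) := by
        apply div_le_div_of_nonneg_left (by norm_num) hpr
        nlinarith
      refine le_trans (le_of_eq e) ?_
      ring_nf at hξ1 hple ⊢
      linarith
    · push_cast [Nat.cast_sub (by omega : 1 ≤ q)]
      have e : 2 * (q : ℝ) * (3 * ((p : ℝ) + 2) / (2 * (p : ℝ) ^ 2))
          - 2 * (3 * ((p : ℝ) - 1) / (2 * (p : ℝ) ^ 2))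
          = 1 - 2 / (p : ℝ) + 1 / (p : ℝ) ^ 2 := by
        rw [hpq]; field_simp; ring
      have h1 : (0 : ℝ) < 1 / (p : ℝ) ^ 2 := by positivity
      have h2 : (0 : ℝ) < 8 / (p : ℝ) ^ 2 := by positivity
      refine le_trans ?_ (le_of_eq e.symm)
      ring_nf at hξ2 h1 h2 ⊢
      linarith
  · -- p ≡ 2 mod 3
    rw [Ip, if_neg (by omega), if_neg (by omega)] at hξ
    obtain ⟨hξ1, hξ2⟩ := hξ
    set q := p / 3 with hqdef
    have hq : p = 3 * q + 2 := by omega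
    have hq1 : 1 ≤ q := by omega
    have hpq : (p : ℝ) = 3 * (q : ℝ) + 2 := by exact_mod_cast hq
    refine key p (2 * q + 1) 1 q N ξ hN hp0 (by omega) (by omega) ?_ ?_
    · push_cast
      have e : (2 * (q : ℝ) + 1) * (3 * ((p : ℝ) - 1) / (2 * (p : ℝ) ^ 2))
          - 1 * (3 * ((p : ℝ) + 2) / (2 * (p : ℝ) ^ 2))
          - (q : ℝ) * (3 / (p : ℝ) ^ 2)
          = 1 - 4 / (p : ℝ) - 1 / (2 * (p : ℝ) ^ 2) := by
        rw [hpq]; field_simp; ring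
      have h1 : (0 : ℝ) < 1 / (2 * (p : ℝ) ^ 2) := by positivity
      have h2 : (0 : ℝ) < 4 / (p : ℝ) ^ 2 := by positivity
      refine le_trans (le_of_eq e) ?_
      ring_nf at hξ1 h1 h2 ⊢
      linarith
    · push_cast
      have e : (2 * (q : ℝ) + 1) * (3 * ((p : ℝ) + 2) / (2 * (p : ℝ) ^ 2))
          - 1 * (3 * ((p : ℝ) - 1) / (2 * (p : ℝ) ^ 2))
          = 1 + 1 / (2 * (p : ℝ) ^ 2) := by
        rw [hpq]; field_simp; ring
      have h1 : (0 : ℝ) < 1 / (2 * (p : ℝ) ^ 2) := by positivity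
      have h2 : (0 : ℝ) < 4 / (p : ℝ) ^ 2 := by positivity
      refine le_trans ?_ (le_of_eq e.symm)
      ring_nf at hξ2 h1 h2 ⊢
      linarith
end

section
/- Let p > 1 be an odd integer and N ≥ 1 a real number. Then for all a, b ∈ Ã_N and c ∈ Ã_{2N}, one has |λ(a) + λ(b) − λ(c) + 2N²| ≤ 4N + 3; in particular λ(a) + λ(b) − λ(c) = −2N² + O(N) uniformly in N. -/
theorem triple_resonance_estimate (p : ℕ) (hp1 : 1 < p) (hpodd : Odd p) (N : ℝ) (hN : 1 ≤ N)
    (a b c : ℝ) (ha : a ∈ AtildeN p N) (hb : b ∈ AtildeN p N) (hc : c ∈ Atilde2N p N) :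
    |lam a + lam b - lam c + 2 * N ^ 2| ≤ 4 * N + 3 := by
  obtain ⟨ha1, ha2⟩ := ha
  obtain ⟨hb1, hb2⟩ := hb
  obtain ⟨hc1, hc2⟩ := hc
  have hp3 : 3 ≤ p := by
    rcases hpodd with ⟨k, hk⟩; omega
  have hp3' : (3:ℝ) ≤ (p:ℝ) := by exact_mod_cast hp3
  have hub : 3 * ((p:ℝ) + 2) / (2 * (p:ℝ)^2) ≤ 1 := by
    rw [div_le_one (by positivity)]; nlinarith
  have hlb : 0 ≤ 3 * ((p:ℝ) - 1) / (2 * (p:ℝ)^2) := by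
    apply div_nonneg (by linarith) (by positivity)
  have hcub : 3 / (p:ℝ)^2 ≤ 1/3 := by
    rw [div_le_iff₀ (by positivity)]; nlinarith
  have haN : N ≤ a := by linarith
  have haN2 : a ≤ N + 1 := by linarith
  have hbN : N ≤ b := by linarith
  have hbN2 : b ≤ N + 1 := by linarith
  have hcN2 : c ≤ 2*N + 1/3 := by linarith
  have lam_ge : ∀ x : ℝ, x^2 ≤ lam x := fun x => by
    rw [lam, Real.le_sqrt (sq_nonneg x)]
    · nlinarith [sq_nonneg x]
    · positivity
  have lam_le : ∀ x : ℝ, lam x ≤ x^2 + 1/2 := fun x => by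
    rw [lam]
    have h : x^2 + x^4 ≤ (x^2 + 1/2)^2 := by nlinarith [sq_nonneg x]
    calc Real.sqrt (x^2+x^4) ≤ Real.sqrt ((x^2+1/2)^2) := Real.sqrt_le_sqrt h
      _ = x^2 + 1/2 := Real.sqrt_sq (by positivity)
  have hN0 : (0:ℝ) < N := by linarith
  clear ha1 ha2 hb1 hb2 hc2 hub hlb hcub hp3' hp3 hp1 hpodd
  have haSq : N^2 ≤ a^2 := by nlinarith [mul_self_le_mul_self (le_of_lt hN0) haN]
  have hbSq : N^2 ≤ b^2 := by nlinarith [mul_self_le_mul_self (le_of_lt hN0) hbN]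
  have haSq2 : a^2 ≤ N^2 + 2*N + 1 := by
    nlinarith [mul_self_le_mul_self (by linarith : (0:ℝ) ≤ a) haN2]
  have hbSq2 : b^2 ≤ N^2 + 2*N + 1 := by
    nlinarith [mul_self_le_mul_self (by linarith : (0:ℝ) ≤ b) hbN2]
  have hcSq : 4*N^2 ≤ c^2 := by
    nlinarith [mul_self_le_mul_self (by linarith : (0:ℝ) ≤ 2*N) hc1]
  have hcSq2 : c^2 ≤ 4*N^2 + 2*N := by
    nlinarith [mul_self_le_mul_self (by linarith : (0:ℝ) ≤ c) hcN2]
  rw [abs_le]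
  constructor
  · linarith [lam_ge a, lam_ge b, lam_le c]
  · linarith [lam_le a, lam_le b, lam_ge c]
end

section
/- Let p be a positive even integer and let N ≥ p be an integer. If ε₁, …, ε_p ∈ {+1, −1} and a₁, …, a_p ∈ {N, N+1} satisfy ε₁a₁ + ⋯ + ε_p a_p = p/2, then exactly p/2 indices j have εⱼ = +1, every index j with εⱼ = +1 has aⱼ = N + 1, and every index j with εⱼ = −1 has aⱼ = N. In other words, the only representation of p/2 is ξ = (N+1−N) + ⋯ + (N+1−N) with p/2 pairs. -/
theorem periodic_even_unique_representation (p : ℕ) (hp : 0 < p) (hpe : Even p)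
    (N : ℤ) (hN : (p : ℤ) ≤ N) (ε a : Fin p → ℤ)
    (hε : ∀ j, ε j = 1 ∨ ε j = -1) (ha : ∀ j, a j = N ∨ a j = N + 1)
    (hξ : ∑ j, ε j * a j = ((p / 2 : ℕ) : ℤ)) :
    {j : Fin p | ε j = 1}.ncard = p / 2 ∧
      (∀ j, ε j = 1 → a j = N + 1) ∧ (∀ j, ε j = -1 → a j = N) := by
  classical
  set S := Finset.univ.filter (fun j => ε j = 1) with hS
  set k := S.card with hk
  have hkp : k ≤ p := by
    simpa using (Finset.card_filter_le Finset.univ (fun j => ε j = 1))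
  have hbool : ∑ j, (if ε j = 1 then (1:ℤ) else 0) = (k : ℤ) := by
    simp [Finset.sum_boole, hS, hk]
  have hsum_eps : ∑ j, ε j = 2 * (k:ℤ) - p := by
    have h1 : ∑ j, ε j = ∑ j, (2 * (if ε j = 1 then (1:ℤ) else 0) - 1) := by
      apply Finset.sum_congr rfl
      intro j _
      rcases hε j with h | h <;> simp [h]
    rw [h1, Finset.sum_sub_distrib, ← Finset.mul_sum, hbool]
    simp
  -- decompose the main sum
  have hdecomp : ∑ j, ε j * a j = (2 * (k:ℤ) - p) * N + ∑ j, ε j * (a j - N) := by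
    rw [← hsum_eps, Finset.sum_mul, ← Finset.sum_add_distrib]
    apply Finset.sum_congr rfl
    intro j _
    ring
  set t := ∑ j, ε j * (a j - N) with ht
  -- upper bound on t
  have htk : t ≤ (k : ℤ) := by
    rw [ht, ← hbool]
    apply Finset.sum_le_sum
    intro j _
    rcases hε j with h | h <;> rcases ha j with h' | h' <;> simp [h, h']
  have htlo : (k : ℤ) - p ≤ t := by
    have : ∑ j, ((if ε j = 1 then (1:ℤ) else 0) - 1) ≤ t := by
      apply Finset.sum_le_sum
      intro j _
      rcases hε j with h | h <;> rcases ha j with h' | h' <;> simp [h, h']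
    calc (k:ℤ) - p = ∑ j, ((if ε j = 1 then (1:ℤ) else 0) - 1) := by
          rw [Finset.sum_sub_distrib, hbool]; simp
      _ ≤ t := this
  have h2 : 2 * ((p / 2 : ℕ) : ℤ) = (p : ℤ) := by
    obtain ⟨m, hm⟩ := hpe
    omega
  have hmain : (2 * (k:ℤ) - p) * N + t = ((p / 2 : ℕ) : ℤ) := by
    rw [← hdecomp]; exact hξ
  have hN0 : (0:ℤ) ≤ N := le_trans (by positivity) hN
  -- show 2k = p
  have hkeq : 2 * (k:ℤ) - p = 0 := by
    by_contra hm
    rcases lt_or_gt_of_ne hm with hlt | hgt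
    · have h1 : 2 * (k:ℤ) - p ≤ -1 := by omega
      have : (2 * (k:ℤ) - p) * N ≤ (-1) * (p:ℤ) := by
        calc (2 * (k:ℤ) - p) * N ≤ (-1) * N :=
              mul_le_mul_of_nonneg_right h1 hN0
          _ ≤ (-1) * (p:ℤ) := by linarith
      linarith
    · have h1 : (1:ℤ) ≤ 2 * (k:ℤ) - p := by omega
      have : (p:ℤ) ≤ (2 * (k:ℤ) - p) * N := by
        calc (p:ℤ) ≤ N := hN
          _ = 1 * N := (one_mul N).symm
          _ ≤ (2 * (k:ℤ) - p) * N := mul_le_mul_of_nonneg_right h1 hN0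
      linarith
  have hkp2 : k = p / 2 := by omega
  have hteq : t = (k : ℤ) := by
    rw [hkeq, zero_mul, zero_add] at hmain
    omega
  -- equality case termwise
  have hterm : ∀ j, ε j * (a j - N) = (if ε j = 1 then (1:ℤ) else 0) := by
    have hle : ∀ j ∈ Finset.univ, ε j * (a j - N) ≤ (if ε j = 1 then (1:ℤ) else 0) := by
      intro j _
      rcases hε j with h | h <;> rcases ha j with h' | h' <;> simp [h, h']
    have heq : ∑ j, ε j * (a j - N) = ∑ j, (if ε j = 1 then (1:ℤ) else 0) := by
      rw [hbool, ← ht, hteq]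
    intro j
    exact (Finset.sum_eq_sum_iff_of_le hle).mp heq j (Finset.mem_univ j)
  refine ⟨?_, ?_, ?_⟩
  · have hset : {j : Fin p | ε j = 1} = (S : Set (Fin p)) := by
      ext j; simp [hS]
    rw [hset, Set.ncard_coe_finset, ← hk, hkp2]
  · intro j hj
    have := hterm j
    rw [hj] at this
    simp at this
    linarith
  · intro j hj
    have := hterm j
    rw [hj] at this
    norm_num at this
    linarith
end

section
/- Let p > 1 be an odd integer, set m = 2·⌊(p−3)/6⌋ + 1 and ξ = (p+1)/2 + ⌊(p−3)/6⌋. There exists N₀ (depending only on p) such that for every integer N ≥ N₀ the following holds: if ε₁, …, ε_p ∈ {+1, −1} and a₁, …, a_p ∈ {N, N+1, 2N} satisfy ε₁a₁ + ⋯ + ε_p a_p = ξ, then every index j with εⱼ = +1 has aⱼ = N+1, no index has εⱼ = −1 and aⱼ = N+1, exactly m indices have εⱼ = −1 and aⱼ = 2N, and the number of indices with εⱼ = −1 and aⱼ = N equals 0 if p ≡ 0 (mod 3), 2 if p ≡ 1 (mod 3), and 1 if p ≡ 2 (mod 3). -/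
private lemma aux_sum {n : ℕ} (P : Fin n → Prop) [DecidablePred P] (c : ℤ) :
    (∑ j, if P j then c else 0) = ((Finset.univ.filter P).card : ℤ) * c := by
  rw [← Finset.sum_filter, Finset.sum_const, nsmul_eq_mul]

private lemma aux_ncard {n : ℕ} (P : Fin n → Prop) [DecidablePred P] :
    {j | P j}.ncard = (Finset.univ.filter P).card := by
  rw [← Set.ncard_coe_finset]
  congr 1
  ext j
  simp

theorem periodic_odd_classification (p : ℕ) (hp1 : 1 < p) (hpodd : Odd p) :
    ∃ N₀ : ℤ, ∀ N : ℤ, N₀ ≤ N →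
      ∀ ε a : Fin p → ℤ, (∀ j, ε j = 1 ∨ ε j = -1) →
        (∀ j, a j = N ∨ a j = N + 1 ∨ a j = 2 * N) →
        (∑ j, ε j * a j) = (((p + 1) / 2 + (p - 3) / 6 : ℕ) : ℤ) →
        (∀ j, ε j = 1 → a j = N + 1) ∧
          (∀ j, ¬(ε j = -1 ∧ a j = N + 1)) ∧
          {j : Fin p | ε j = -1 ∧ a j = 2 * N}.ncard = 2 * ((p - 3) / 6) + 1 ∧
          {j : Fin p | ε j = -1 ∧ a j = N}.ncard =
            (if p % 3 = 0 then 0 else if p % 3 = 1 then 2 else 1) := by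
  refine ⟨3 * (p : ℤ) + 3, ?_⟩
  intro N hN ε a hε ha hsum
  have hp2 : p % 2 = 1 := Nat.odd_iff.mp hpodd
  have hpZ : (2 : ℤ) ≤ (p : ℤ) := by exact_mod_cast hp1
  have hN9 : (9 : ℤ) ≤ N := by linarith
  have ne1 : ¬(N = N + 1) := by omega
  have ne2 : ¬(N = 2 * N) := by omega
  have ne3 : ¬(N + 1 = N) := by omega
  have ne4 : ¬(N + 1 = 2 * N) := by omega
  have ne5 : ¬(2 * N = N) := by omega
  have ne6 : ¬(2 * N = N + 1) := by omega
  have ne7 : ¬((1 : ℤ) = -1) := by omega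
  have ne8 : ¬((-1 : ℤ) = 1) := by omega
  set x1 := (Finset.univ.filter (fun j => ε j = 1 ∧ a j = N)).card with hx1d
  set x2 := (Finset.univ.filter (fun j => ε j = 1 ∧ a j = N + 1)).card with hx2d
  set x3 := (Finset.univ.filter (fun j => ε j = 1 ∧ a j = 2 * N)).card with hx3d
  set y1 := (Finset.univ.filter (fun j => ε j = -1 ∧ a j = N)).card with hy1d
  set y2 := (Finset.univ.filter (fun j => ε j = -1 ∧ a j = N + 1)).card with hy2d
  set y3 := (Finset.univ.filter (fun j => ε j = -1 ∧ a j = 2 * N)).card with hy3d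
  have hx1p : x1 ≤ p := le_trans (Finset.card_filter_le _ _) (by simp)
  have hx2p : x2 ≤ p := le_trans (Finset.card_filter_le _ _) (by simp)
  have hx3p : x3 ≤ p := le_trans (Finset.card_filter_le _ _) (by simp)
  have hy1p : y1 ≤ p := le_trans (Finset.card_filter_le _ _) (by simp)
  have hy2p : y2 ≤ p := le_trans (Finset.card_filter_le _ _) (by simp)
  have hy3p : y3 ≤ p := le_trans (Finset.card_filter_le _ _) (by simp)
  -- partition identity
  have hpartZ : (x1 : ℤ) + x2 + x3 + y1 + y2 + y3 = p := by
    have hpt : ∀ j : Fin p,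
        ((if ε j = 1 ∧ a j = N then (1 : ℤ) else 0)
        + (if ε j = 1 ∧ a j = N + 1 then (1 : ℤ) else 0)
        + (if ε j = 1 ∧ a j = 2 * N then (1 : ℤ) else 0)
        + (if ε j = -1 ∧ a j = N then (1 : ℤ) else 0)
        + (if ε j = -1 ∧ a j = N + 1 then (1 : ℤ) else 0)
        + (if ε j = -1 ∧ a j = 2 * N then (1 : ℤ) else 0)) = 1 := by
      intro j
      rcases hε j with h | h <;> rcases ha j with h' | h' | h' <;>
        simp [h, h', ne1, ne2, ne3, ne4, ne5, ne6, ne7, ne8]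
    have hs : ∑ j : Fin p, (1 : ℤ) = p := by simp
    rw [← Finset.sum_congr rfl (fun j _ => hpt j)] at hs
    rw [Finset.sum_add_distrib, Finset.sum_add_distrib, Finset.sum_add_distrib,
      Finset.sum_add_distrib, Finset.sum_add_distrib] at hs
    rw [aux_sum, aux_sum, aux_sum, aux_sum, aux_sum, aux_sum] at hs
    rw [← hx1d, ← hx2d, ← hx3d, ← hy1d, ← hy2d, ← hy3d] at hs
    linarith
  -- value identity
  have hvalZ : (x1 : ℤ) * N + x2 * (N + 1) + x3 * (2 * N)
      - y1 * N - y2 * (N + 1) - y3 * (2 * N)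
      = (((p + 1) / 2 + (p - 3) / 6 : ℕ) : ℤ) := by
    have hpt : ∀ j : Fin p, ε j * a j =
        (if ε j = 1 ∧ a j = N then (N : ℤ) else 0)
        + (if ε j = 1 ∧ a j = N + 1 then N + 1 else 0)
        + (if ε j = 1 ∧ a j = 2 * N then 2 * N else 0)
        - (if ε j = -1 ∧ a j = N then N else 0)
        - (if ε j = -1 ∧ a j = N + 1 then N + 1 else 0)
        - (if ε j = -1 ∧ a j = 2 * N then 2 * N else 0) := by
      intro j
      rcases hε j with h | h <;> rcases ha j with h' | h' | h' <;>
        simp [h, h', ne1, ne2, ne3, ne4, ne5, ne6, ne7, ne8]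
    rw [Finset.sum_congr rfl (fun j _ => hpt j)] at hsum
    rw [Finset.sum_sub_distrib, Finset.sum_sub_distrib, Finset.sum_sub_distrib,
      Finset.sum_add_distrib, Finset.sum_add_distrib] at hsum
    rw [aux_sum, aux_sum, aux_sum, aux_sum, aux_sum, aux_sum] at hsum
    rw [← hx1d, ← hx2d, ← hx3d, ← hy1d, ← hy2d, ← hy3d] at hsum
    linarith
  have hξle : (((p + 1) / 2 + (p - 3) / 6 : ℕ) : ℤ) ≤ p := by
    have : ((p + 1) / 2 + (p - 3) / 6 : ℕ) ≤ p := by omega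
    exact_mod_cast this
  have hξ0 : (0 : ℤ) ≤ (((p + 1) / 2 + (p - 3) / 6 : ℕ) : ℤ) := Int.natCast_nonneg _
  have hkey : ((x1 : ℤ) + x2 + 2 * x3 - y1 - y2 - 2 * y3) * N + ((x2 : ℤ) - y2)
      = (((p + 1) / 2 + (p - 3) / 6 : ℕ) : ℤ) := by linear_combination hvalZ
  have hA : (x1 : ℤ) + x2 + 2 * x3 - y1 - y2 - 2 * y3 = 0 := by
    set A : ℤ := (x1 : ℤ) + x2 + 2 * x3 - y1 - y2 - 2 * y3 with hAdef
    have hx2Z : (x2 : ℤ) ≤ p := by exact_mod_cast hx2p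
    have hy2Z : (y2 : ℤ) ≤ p := by exact_mod_cast hy2p
    have hx2Z0 : (0 : ℤ) ≤ (x2 : ℤ) := Int.natCast_nonneg _
    have hy2Z0 : (0 : ℤ) ≤ (y2 : ℤ) := Int.natCast_nonneg _
    rcases lt_trichotomy A 0 with h | h | h
    · exfalso
      have h1 : A ≤ -1 := by omega
      have h2 : A * N ≤ -1 * N := mul_le_mul_of_nonneg_right h1 (by linarith)
      linarith
    · exact h
    · exfalso
      have h1 : 1 ≤ A := by omega
      have h2 : 1 * N ≤ A * N := mul_le_mul_of_nonneg_right h1 (by linarith)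
      linarith
  have E2 : (x2 : ℤ) - y2 = (((p + 1) / 2 + (p - 3) / 6 : ℕ) : ℤ) := by
    linear_combination hkey - N * hA
  have hx1z : x1 = 0 := by omega
  have hx3z : x3 = 0 := by omega
  have hy2z : y2 = 0 := by omega
  refine ⟨?_, ?_, ?_, ?_⟩
  · intro j hj
    rcases ha j with h' | h' | h'
    · exfalso
      have hm : j ∈ Finset.univ.filter (fun j => ε j = 1 ∧ a j = N) :=
        Finset.mem_filter.mpr ⟨Finset.mem_univ j, hj, h'⟩
      have := Finset.card_pos.mpr ⟨j, hm⟩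
      rw [← hx1d] at this
      omega
    · exact h'
    · exfalso
      have hm : j ∈ Finset.univ.filter (fun j => ε j = 1 ∧ a j = 2 * N) :=
        Finset.mem_filter.mpr ⟨Finset.mem_univ j, hj, h'⟩
      have := Finset.card_pos.mpr ⟨j, hm⟩
      rw [← hx3d] at this
      omega
  · intro j hj
    have hm : j ∈ Finset.univ.filter (fun j => ε j = -1 ∧ a j = N + 1) :=
      Finset.mem_filter.mpr ⟨Finset.mem_univ j, hj.1, hj.2⟩
    have := Finset.card_pos.mpr ⟨j, hm⟩
    rw [← hy2d] at this
    omega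
  · rw [aux_ncard, ← hy3d]
    omega
  · rw [aux_ncard, ← hy1d]
    split_ifs <;> omega
end

section
/- Let p > 1 be an odd integer and set ξ = (p+1)/2 + ⌊(p−3)/6⌋. There exist constants c > 0, C > 0, and N₀ (depending only on p) such that for every integer N ≥ N₀ and every collection of signs ε₁, …, ε_p ∈ {+1, −1} and points a₁, …, a_p ∈ {N, N+1, 2N} with ε₁a₁ + ⋯ + ε_p a_p = ξ, one has c·N² ≤ −(ε₁λ(a₁) + ⋯ + ε_pλ(a_p)) ≤ C·N². -/
theorem periodic_odd_resonance_bound (p : ℕ) (hp1 : 1 < p) (hpodd : Odd p) :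
    ∃ c > (0 : ℝ), ∃ C > (0 : ℝ), ∃ N₀ : ℤ, ∀ N : ℤ, N₀ ≤ N →
      ∀ ε a : Fin p → ℤ, (∀ j, ε j = 1 ∨ ε j = -1) →
        (∀ j, a j = N ∨ a j = N + 1 ∨ a j = 2 * N) →
        (∑ j, ε j * a j) = (((p + 1) / 2 + (p - 3) / 6 : ℕ) : ℤ) →
        c * (N : ℝ) ^ 2 ≤ -(∑ j, (ε j : ℝ) * lam ((a j : ℝ))) ∧
          -(∑ j, (ε j : ℝ) * lam ((a j : ℝ))) ≤ C * (N : ℝ) ^ 2 := by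
  obtain ⟨m, hm⟩ := hpodd
  set Xn : ℕ := (p + 1) / 2 + (p - 3) / 6 with hXn
  have hpXn : p ≤ 2 * Xn + 2 := by omega
  have hp3 : 3 ≤ p := by omega
  refine ⟨1, one_pos, 2 * p + 1, by positivity, 2 * (Xn : ℤ) + p + 1, ?_⟩
  intro N hN ε a hε ha hsum
  set X : ℤ := (Xn : ℤ) with hXdef
  have hX0 : (0 : ℤ) ≤ X := Int.natCast_nonneg _
  have hp3' : (3 : ℤ) ≤ (p : ℤ) := by exact_mod_cast hp3
  have hpX' : (p : ℤ) ≤ 2 * X + 2 := by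
    rw [hXdef]; exact_mod_cast hpXn
  have hN2 : (2 : ℤ) ≤ N := by omega
  set E := ∑ j, ε j with hE
  set s1 := ∑ j, (if a j = N then ε j else 0) with hs1
  set s2 := ∑ j, (if a j = N + 1 then ε j else 0) with hs2
  set s3 := ∑ j, (if a j = 2 * N then ε j else 0) with hs3
  -- pointwise identities
  have pw1 : ∀ j, ε j * a j =
      (N * ε j + N * (if a j = 2 * N then ε j else 0)) + (if a j = N + 1 then ε j else 0) := by
    intro j
    rcases ha j with h | h | h
    · rw [h, if_neg (by omega), if_neg (by omega)]; ring
    · rw [h, if_neg (by omega), if_pos rfl]; ring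
    · rw [h, if_pos rfl, if_neg (by omega)]; ring
  have key1 : X = N * (E + s3) + s2 := by
    rw [← hsum, Finset.sum_congr rfl fun j _ => pw1 j]
    simp only [Finset.sum_add_distrib, ← Finset.mul_sum]
    rw [hE, hs2, hs3]
    ring
  -- parity of E
  have hEpar : E % 2 = 1 := by
    have h1 : E % 2 = (∑ j, ε j % 2) % 2 := by
      rw [hE]; exact Finset.sum_int_mod _ _ _
    have h2 : ∀ j ∈ (Finset.univ : Finset (Fin p)), ε j % 2 = (1 : ℤ) := by
      intro j _; rcases hε j with h | h <;> rw [h] <;> decide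
    rw [Finset.sum_congr rfl h2, Finset.sum_const, Finset.card_univ, Fintype.card_fin,
      nsmul_eq_mul, mul_one] at h1
    have hpm : (p : ℤ) = 2 * m + 1 := by exact_mod_cast hm
    omega
  -- abs bounds
  have habs : ∀ j, |if a j = N then ε j else 0| + |if a j = N + 1 then ε j else 0|
      + |if a j = 2 * N then ε j else 0| = 1 := by
    intro j
    have he : |ε j| = 1 := by rcases hε j with h | h <;> rw [h] <;> decide
    rcases ha j with h | h | h
    · rw [h, if_pos rfl, if_neg (by omega), if_neg (by omega)]; simp [he]
    · rw [h, if_neg (by omega), if_pos rfl, if_neg (by omega)]; simp [he]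
    · rw [h, if_neg (by omega), if_neg (by omega), if_pos rfl]; simp [he]
  have bsum : |s1| + |s2| + |s3| ≤ (p : ℤ) := by
    have h1 : |s1| ≤ ∑ j, |if a j = N then ε j else 0| := by
      rw [hs1]; exact Finset.abs_sum_le_sum_abs _ _
    have h2 : |s2| ≤ ∑ j, |if a j = N + 1 then ε j else 0| := by
      rw [hs2]; exact Finset.abs_sum_le_sum_abs _ _
    have h3 : |s3| ≤ ∑ j, |if a j = 2 * N then ε j else 0| := by
      rw [hs3]; exact Finset.abs_sum_le_sum_abs _ _
    have h4 : (∑ j, |if a j = N then ε j else 0|) + (∑ j, |if a j = N + 1 then ε j else 0|)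
        + (∑ j, |if a j = 2 * N then ε j else 0|) = (p : ℤ) := by
      rw [← Finset.sum_add_distrib, ← Finset.sum_add_distrib,
        Finset.sum_congr rfl fun j _ => habs j, Finset.sum_const, Finset.card_univ,
        Fintype.card_fin, nsmul_eq_mul, mul_one]
    linarith
  have hs2b : |s2| ≤ (p : ℤ) := by
    have := abs_nonneg s1; have := abs_nonneg s3; linarith
  have hs2l := le_abs_self s2
  have hs2l' := neg_abs_le s2
  -- the leading coefficient vanishes
  have hEs3 : E + s3 = 0 := by
    rcases lt_trichotomy (E + s3) 0 with h | h | h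
    · exfalso
      have h1 : N * (E + s3) ≤ N * (-1) :=
        mul_le_mul_of_nonneg_left (by omega) (by omega)
      rw [mul_neg_one] at h1
      linarith
    · exact h
    · exfalso
      have h1 : N * 1 ≤ N * (E + s3) :=
        mul_le_mul_of_nonneg_left (by omega) (by omega)
      rw [mul_one] at h1
      linarith
  have hs2X : s2 = X := by
    have hz : N * (E + s3) = 0 := by rw [hEs3, mul_zero]
    linarith [key1]
  have hs3E : s3 = -E := by omega
  -- E = s1 + s2 + s3
  have pwE : ∀ j, ε j = (if a j = N then ε j else 0) + (if a j = N + 1 then ε j else 0)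
      + (if a j = 2 * N then ε j else 0) := by
    intro j
    rcases ha j with h | h | h
    · rw [h, if_pos rfl, if_neg (by omega), if_neg (by omega)]; ring
    · rw [h, if_neg (by omega), if_pos rfl, if_neg (by omega)]; ring
    · rw [h, if_neg (by omega), if_neg (by omega), if_pos rfl]; ring
  have hEsplit : E = s1 + s2 + s3 := by
    rw [hE, Finset.sum_congr rfl fun j _ => pwE j]
    simp only [Finset.sum_add_distrib]
    rfl
  -- E ≥ 1
  have l1 := le_abs_self s1
  have l2 := neg_abs_le s1
  have l5 := le_abs_self s3
  have l6 := neg_abs_le s3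
  have hEne : E ≠ 0 := by omega
  have hE1 : 1 ≤ E := by
    rcases le_or_gt 1 E with h | h
    · exact h
    · exfalso
      have hEle : E ≤ -1 := by omega
      linarith
  have hEp : E ≤ (p : ℤ) := by linarith
  -- quadratic sum
  have pw2 : ∀ j, ε j * (a j) ^ 2 =
      (N ^ 2 * ε j + (3 * N ^ 2) * (if a j = 2 * N then ε j else 0))
      + (2 * N + 1) * (if a j = N + 1 then ε j else 0) := by
    intro j
    rcases ha j with h | h | h
    · rw [h, if_neg (by omega), if_neg (by omega)]; ring
    · rw [h, if_neg (by omega), if_pos rfl]; ring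
    · rw [h, if_pos rfl, if_neg (by omega)]; ring
  have key2 : (∑ j, ε j * (a j) ^ 2) = -2 * E * N ^ 2 + (2 * N + 1) * X := by
    rw [Finset.sum_congr rfl fun j _ => pw2 j]
    simp only [Finset.sum_add_distrib, ← Finset.mul_sum]
    rw [← hE, ← hs2, ← hs3, hs2X, hs3E]
    ring
  -- real part
  have hsplit : (∑ j, (ε j : ℝ) * lam ((a j : ℝ)))
      = ((∑ j, ε j * (a j) ^ 2 : ℤ) : ℝ)
        + ∑ j, (ε j : ℝ) * (lam ((a j : ℝ)) - ((a j : ℝ)) ^ 2) := by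
    push_cast
    rw [← Finset.sum_add_distrib]
    exact Finset.sum_congr rfl fun j _ => by ring
  have hTb : |∑ j, (ε j : ℝ) * (lam ((a j : ℝ)) - ((a j : ℝ)) ^ 2)| ≤ (p : ℝ) / 2 := by
    calc |∑ j, (ε j : ℝ) * (lam ((a j : ℝ)) - ((a j : ℝ)) ^ 2)|
        ≤ ∑ j, |(ε j : ℝ) * (lam ((a j : ℝ)) - ((a j : ℝ)) ^ 2)| :=
          Finset.abs_sum_le_sum_abs _ _
      _ ≤ ∑ _j : Fin p, ((1 : ℝ) / 2) := by
          apply Finset.sum_le_sum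
          intro j _
          have hb1 := lam_lb ((a j : ℝ))
          have hb2 := lam_ub ((a j : ℝ))
          have he : |(ε j : ℝ)| = 1 := by
            rcases hε j with h | h <;> rw [h] <;> simp
          rw [abs_mul, he, one_mul, abs_le]
          constructor <;> linarith
      _ = (p : ℝ) / 2 := by
          rw [Finset.sum_const, Finset.card_univ, Fintype.card_fin, nsmul_eq_mul]
          ring
  have hTb' := abs_le.mp hTb
  -- real casts
  have hEr : (1 : ℝ) ≤ (E : ℝ) := by exact_mod_cast hE1
  have hEpr : (E : ℝ) ≤ (p : ℝ) := by exact_mod_cast hEp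
  have hNr : 2 * (X : ℝ) + (p : ℝ) + 1 ≤ (N : ℝ) := by exact_mod_cast hN
  have hXr : (0 : ℝ) ≤ (X : ℝ) := by exact_mod_cast hX0
  have hpr : (3 : ℝ) ≤ (p : ℝ) := by exact_mod_cast hp3'
  have hNpos : (0 : ℝ) ≤ (N : ℝ) := by linarith
  have hN1 : (1 : ℝ) ≤ (N : ℝ) := by linarith
  have h2E : 2 * (N : ℝ) ^ 2 ≤ 2 * (E : ℝ) * (N : ℝ) ^ 2 := by
    have h := mul_le_mul_of_nonneg_right (show (2 : ℝ) ≤ 2 * (E : ℝ) by linarith)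
      (sq_nonneg (N : ℝ))
    linarith [h]
  have hNsq : (2 * (X : ℝ) + (p : ℝ) + 1) * (N : ℝ) ≤ (N : ℝ) ^ 2 := by
    have h := mul_le_mul_of_nonneg_right hNr hNpos
    have h2 : (N : ℝ) * (N : ℝ) = (N : ℝ) ^ 2 := by ring
    linarith [h]
  have hpN : (p : ℝ) ≤ (p : ℝ) * (N : ℝ) := by
    have h := mul_le_mul_of_nonneg_left hN1 (show (0 : ℝ) ≤ (p : ℝ) by linarith)
    linarith [h]
  have h2Ep : 2 * (E : ℝ) * (N : ℝ) ^ 2 ≤ 2 * (p : ℝ) * (N : ℝ) ^ 2 := by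
    have h := mul_le_mul_of_nonneg_right (show 2 * (E : ℝ) ≤ 2 * (p : ℝ) by linarith)
      (sq_nonneg (N : ℝ))
    linarith [h]
  have hXN : (0 : ℝ) ≤ (2 * (N : ℝ) + 1) * (X : ℝ) :=
    mul_nonneg (by linarith) hXr
  have hpN2 : (p : ℝ) / 2 ≤ (N : ℝ) ^ 2 := by
    linarith [sq_nonneg ((N : ℝ) - 1)]
  rw [hsplit, key2]
  push_cast
  constructor
  · linarith [hTb'.2]
  · linarith [hTb'.1]
end

section
/- Let p > 1 be an odd integer and let N > 2p + 2 be a real number. Then the counts (n₁, n₂, n₃, n₄) of any representation ξ = ε₁a₁ + ⋯ + ε_p a_p with εⱼ ∈ {+1, −1}, aⱼ ∈ A_N, and ξ ∈ I_p satisfy: if p ≡ 0 (mod 3), then (n₁, n₂, n₃, n₄) = (2p/3, 0, 0, p/3); if p ≡ 2 (mod 3), then (n₁, n₂, n₃, n₄) ∈ { ((2p−1)/3, 1, 0, (p−2)/3), ((2p−4)/3, 0, 1, (p+1)/3) }; and if p ≡ 1 (mod 3), then (n₁, n₂, n₃, n₄) ∈ { ((2p−2)/3, 2, 0, (p−4)/3),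 ((2p−5)/3, 1, 1, (p−1)/3), ((2p−8)/3, 0, 2, (p+2)/3) }. -/
private lemma aux_bal (q N ξ x1 x2 x3 x4 : ℝ) (hq : 3 ≤ q) (hN : 2*q + 2 < N)
    (hsum : x1 + x2 + x3 + x4 = q)
    (hx1 : 0 ≤ x1) (hx2 : 0 ≤ x2) (hx3 : 0 ≤ x3) (hx4 : 0 ≤ x4)
    (hUc : ξ ≤ x1*(N+1) - x2*N + x3*(2*N+1) - x4*(2*N))
    (hLc : x1*N - x2*(N+1) + x3*(2*N) - x4*(2*N+1) ≤ ξ)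
    (hxlo : -2 ≤ ξ) (hxhi : ξ ≤ 2) :
    -1 < x1 - x2 + 2*x3 - 2*x4 ∧ x1 - x2 + 2*x3 - 2*x4 < 1 := by
  have hNpos : 0 < N := by linarith
  constructor
  · by_contra hcon
    push_neg at hcon
    have hNd : N * (x1 - x2 + 2*x3 - 2*x4) ≤ N * (-1) :=
      mul_le_mul_of_nonneg_left hcon (le_of_lt hNpos)
    nlinarith [hUc, hxlo, hNd]
  · by_contra hcon
    push_neg at hcon
    have hNd : N * 1 ≤ N * (x1 - x2 + 2*x3 - 2*x4) :=
      mul_le_mul_of_nonneg_left hcon (le_of_lt hNpos)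
    nlinarith [hLc, hxhi, hNd]

private lemma aux_k (q ξ x1 x2 x3 x4 c : ℝ) (hq : 3 ≤ q)
    (hsum : x1 + x2 + x3 + x4 = q) (hbal : x1 + 2*x3 = x2 + 2*x4)
    (hx2 : 0 ≤ x2) (hx3 : 0 ≤ x3) (hx4 : 0 ≤ x4)
    (hU4 : 2*q^2*ξ ≤ 3*(q+2)*x1 - 3*(q-1)*x2 + 6*x3)
    (hlow : 2*q^2 - c ≤ 2*q^2*ξ)
    (hc : c ≤ 8*q - 4) : x2 + x3 < 3 := by
  by_contra hcon
  push_neg at hcon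
  have hsumq : q*(x1+x2+x3+x4) = q*q := by rw [hsum]
  have hbalq : q*(x1+2*x3) = q*(x2+2*x4) := by rw [hbal]
  have hprod : (0:ℝ) ≤ (x2 + x3 - 3) * (q - 3) :=
    mul_nonneg (by linarith) (by linarith)
  nlinarith [hU4, hlow, hsumq, hbalq, hsum, hbal, hprod, hx2, hx3, hx4, hq, hc]

private lemma aux_k1 (q ξ x1 x2 x3 x4 : ℝ) (hq : 7 ≤ q)
    (hsum : x1 + x2 + x3 + x4 = q) (hbal : x1 + 2*x3 = x2 + 2*x4)
    (hx2 : 0 ≤ x2) (hx3 : 0 ≤ x3) (hx4 : 0 ≤ x4)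
    (hU4 : 2*q^2*ξ ≤ 3*(q+2)*x1 - 3*(q-1)*x2 + 6*x3)
    (hlow : 2*q^2 - (6*q + 8) ≤ 2*q^2*ξ) : x2 + x3 < 3 := by
  by_contra hcon
  push_neg at hcon
  have hsumq : q*(x1+x2+x3+x4) = q*q := by rw [hsum]
  have hbalq : q*(x1+2*x3) = q*(x2+2*x4) := by rw [hbal]
  have hprod : (0:ℝ) ≤ (x2 + x3 - 3) * (q - 7) :=
    mul_nonneg (by linarith) (by linarith)
  nlinarith [hU4, hlow, hsumq, hbalq, hsum, hbal, hprod, hx2, hx3, hx4, hq]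

private lemma aux_clear (q N ξ x1 x2 x3 x4 : ℝ) (hq : 0 < q)
    (hU : ξ ≤ x1*(N + 3*(q+2)/(2*q^2)) - x2*(N + 3*(q-1)/(2*q^2)) + x3*(2*N + 3/q^2) - x4*(2*N))
    (hbal : x1 + 2*x3 = x2 + 2*x4) :
    2*q^2*ξ ≤ 3*(q+2)*x1 - 3*(q-1)*x2 + 6*x3 := by
  have hq0 : q ≠ 0 := ne_of_gt hq
  have h := mul_le_mul_of_nonneg_left hU (show (0:ℝ) ≤ 2*q^2 by positivity)
  have heq : 2*q^2*(x1*(N + 3*(q+2)/(2*q^2)) - x2*(N + 3*(q-1)/(2*q^2))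
      + x3*(2*N + 3/q^2) - x4*(2*N))
      = 3*(q+2)*x1 - 3*(q-1)*x2 + 6*x3 + 2*q^2*N*(x1 - x2 + 2*x3 - 2*x4) := by
    field_simp
    ring
  rw [heq] at h
  have hz : 2*q^2*N*(x1 - x2 + 2*x3 - 2*x4) = 0 := by
    have : x1 - x2 + 2*x3 - 2*x4 = 0 := by linarith
    rw [this, mul_zero]
  linarith only [h, hz]

private lemma aux_low0 (q ξ : ℝ) (hq : 0 < q) (h : 1 - 2/q ≤ ξ) :
    2*q^2 - 4*q ≤ 2*q^2*ξ := by
  have hq0 : q ≠ 0 := ne_of_gt hq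
  have hh := mul_le_mul_of_nonneg_left h (show (0:ℝ) ≤ 2*q^2 by positivity)
  have heq : 2*q^2*(1 - 2/q) = 2*q^2 - 4*q := by field_simp; ring
  rw [heq] at hh
  exact hh

private lemma aux_low2 (q ξ : ℝ) (hq : 0 < q) (h : 1 - 4/q + 4/q^2 ≤ ξ) :
    2*q^2 - (8*q - 8) ≤ 2*q^2*ξ := by
  have hq0 : q ≠ 0 := ne_of_gt hq
  have hh := mul_le_mul_of_nonneg_left h (show (0:ℝ) ≤ 2*q^2 by positivity)
  have heq : 2*q^2*(1 - 4/q + 4/q^2) = 2*q^2 - (8*q - 8) := by field_simp; ring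
  rw [heq] at hh
  exact hh

private lemma aux_low1 (q ξ : ℝ) (hq : 0 < q) (h : 1 - 3/q - 4/q^2 ≤ ξ) :
    2*q^2 - (6*q + 8) ≤ 2*q^2*ξ := by
  have hq0 : q ≠ 0 := ne_of_gt hq
  have hh := mul_le_mul_of_nonneg_left h (show (0:ℝ) ≤ 2*q^2 by positivity)
  have heq : 2*q^2*(1 - 3/q - 4/q^2) = 2*q^2 - (6*q + 8) := by field_simp; ring
  rw [heq] at hh
  exact hh
set_option maxHeartbeats 2000000 in
theorem counts_full_classification (p : ℕ) (hp1 : 1 < p) (hpodd : Odd p) (N : ℝ) (hN : 2 * (p : ℝ) + 2 < N)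
    (ε a : Fin p → ℝ) (hε : ∀ j, ε j = 1 ∨ ε j = -1) (ha : ∀ j, a j ∈ AN p N)
    (hξ : (∑ j, ε j * a j) ∈ Ip p) :
    (p % 3 = 0 →
      ({j : Fin p | a j ∈ AtildeN p N ∧ ε j = 1}.ncard, {j : Fin p | a j ∈ AtildeN p N ∧ ε j = -1}.ncard, {j : Fin p | a j ∈ Atilde2N p N ∧ ε j = 1}.ncard, {j : Fin p | a j ∈ Atilde2N p N ∧ ε j = -1}.ncard) = (2 * p / 3, 0, 0, p / 3)) ∧
    (p % 3 = 2 →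
      ({j : Fin p | a j ∈ AtildeN p N ∧ ε j = 1}.ncard, {j : Fin p | a j ∈ AtildeN p N ∧ ε j = -1}.ncard, {j : Fin p | a j ∈ Atilde2N p N ∧ ε j = 1}.ncard, {j : Fin p | a j ∈ Atilde2N p N ∧ ε j = -1}.ncard) = ((2 * p - 1) / 3, 1, 0, (p - 2) / 3) ∨
      ({j : Fin p | a j ∈ AtildeN p N ∧ ε j = 1}.ncard, {j : Fin p | a j ∈ AtildeN p N ∧ ε j = -1}.ncard, {j : Fin p | a j ∈ Atilde2N p N ∧ ε j = 1}.ncard, {j : Fin p | a j ∈ Atilde2N p N ∧ ε j = -1}.ncard) = ((2 * p - 4) / 3, 0, 1, (p + 1) / 3)) ∧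
    (p % 3 = 1 →
      ({j : Fin p | a j ∈ AtildeN p N ∧ ε j = 1}.ncard, {j : Fin p | a j ∈ AtildeN p N ∧ ε j = -1}.ncard, {j : Fin p | a j ∈ Atilde2N p N ∧ ε j = 1}.ncard, {j : Fin p | a j ∈ Atilde2N p N ∧ ε j = -1}.ncard) = ((2 * p - 2) / 3, 2, 0, (p - 4) / 3) ∨
      ({j : Fin p | a j ∈ AtildeN p N ∧ ε j = 1}.ncard, {j : Fin p | a j ∈ AtildeN p N ∧ ε j = -1}.ncard, {j : Fin p | a j ∈ Atilde2N p N ∧ ε j = 1}.ncard, {j : Fin p | a j ∈ Atilde2N p N ∧ ε j = -1}.ncard) = ((2 * p - 5) / 3, 1, 1, (p - 1) / 3) ∨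
      ({j : Fin p | a j ∈ AtildeN p N ∧ ε j = 1}.ncard, {j : Fin p | a j ∈ AtildeN p N ∧ ε j = -1}.ncard, {j : Fin p | a j ∈ Atilde2N p N ∧ ε j = 1}.ncard, {j : Fin p | a j ∈ Atilde2N p N ∧ ε j = -1}.ncard) = ((2 * p - 8) / 3, 0, 2, (p + 2) / 3)) := by

  classical
  obtain ⟨m, hm⟩ := hpodd
  have hp3 : 3 ≤ p := by omega
  have hp3R : (3:ℝ) ≤ (p:ℝ) := by exact_mod_cast hp3
  have hppos : (0:ℝ) < (p:ℝ) := by linarith only [hp3R]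
  have hp0 : (p:ℝ) ≠ 0 := ne_of_gt hppos
  have hNpos : (0:ℝ) < N := by linarith only [hN, hppos]
  have hfrac1 : 3*((p:ℝ)+2)/(2*(p:ℝ)^2) ≤ 1 := by
    rw [div_le_one (by positivity)]; nlinarith [hp3R]
  have hfrac2 : 0 ≤ 3*((p:ℝ)-1)/(2*(p:ℝ)^2) := by
    apply div_nonneg (by linarith only [hp3R]) (by positivity)
  have hfrac3 : 3/(p:ℝ)^2 ≤ 1 := by rw [div_le_one (by positivity)]; nlinarith [hp3R]
  have hfrac0 : (0:ℝ) ≤ 3/(p:ℝ)^2 := by positivity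
  set ξ := ∑ j, ε j * a j with hxidef
  set s1 := Finset.univ.filter (fun j : Fin p => a j ∈ AtildeN p N ∧ ε j = 1) with hs1def
  set s2 := Finset.univ.filter (fun j : Fin p => a j ∈ AtildeN p N ∧ ε j = -1) with hs2def
  set s3 := Finset.univ.filter (fun j : Fin p => a j ∈ Atilde2N p N ∧ ε j = 1) with hs3def
  set s4 := Finset.univ.filter (fun j : Fin p => a j ∈ Atilde2N p N ∧ ε j = -1) with hs4def
  have hg1 : {j : Fin p | a j ∈ AtildeN p N ∧ ε j = 1}.ncard = s1.card := by
    rw [show {j : Fin p | a j ∈ AtildeN p N ∧ ε j = 1} = (↑s1 : Set (Fin p)) by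
      ext j; simp [hs1def]]
    exact Set.ncard_coe_finset _
  have hg2 : {j : Fin p | a j ∈ AtildeN p N ∧ ε j = -1}.ncard = s2.card := by
    rw [show {j : Fin p | a j ∈ AtildeN p N ∧ ε j = -1} = (↑s2 : Set (Fin p)) by
      ext j; simp [hs2def]]
    exact Set.ncard_coe_finset _
  have hg3 : {j : Fin p | a j ∈ Atilde2N p N ∧ ε j = 1}.ncard = s3.card := by
    rw [show {j : Fin p | a j ∈ Atilde2N p N ∧ ε j = 1} = (↑s3 : Set (Fin p)) by
      ext j; simp [hs3def]]
    exact Set.ncard_coe_finset _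
  have hg4 : {j : Fin p | a j ∈ Atilde2N p N ∧ ε j = -1}.ncard = s4.card := by
    rw [show {j : Fin p | a j ∈ Atilde2N p N ∧ ε j = -1} = (↑s4 : Set (Fin p)) by
      ext j; simp [hs4def]]
    exact Set.ncard_coe_finset _
  rw [hg1, hg2, hg3, hg4]
  have hAB : ∀ x, x ∈ AtildeN p N → x ∈ Atilde2N p N → False := by
    intro x hx hx2
    rw [AtildeN, Set.mem_Icc] at hx
    rw [Atilde2N, Set.mem_Icc] at hx2
    linarith only [hx.2, hx2.1, hfrac1, hN, hp3R]
  have hd12 : Disjoint s1 s2 := by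
    rw [Finset.disjoint_left]; intro j hj1 hj2
    rw [hs1def, Finset.mem_filter] at hj1
    rw [hs2def, Finset.mem_filter] at hj2
    have h1 := hj1.2.2; have h2 := hj2.2.2; rw [h1] at h2; norm_num at h2
  have hd13 : Disjoint s1 s3 := by
    rw [Finset.disjoint_left]; intro j hj1 hj2
    rw [hs1def, Finset.mem_filter] at hj1
    rw [hs3def, Finset.mem_filter] at hj2
    exact hAB _ hj1.2.1 hj2.2.1
  have hd14 : Disjoint s1 s4 := by
    rw [Finset.disjoint_left]; intro j hj1 hj2
    rw [hs1def, Finset.mem_filter] at hj1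
    rw [hs4def, Finset.mem_filter] at hj2
    exact hAB _ hj1.2.1 hj2.2.1
  have hd23 : Disjoint s2 s3 := by
    rw [Finset.disjoint_left]; intro j hj1 hj2
    rw [hs2def, Finset.mem_filter] at hj1
    rw [hs3def, Finset.mem_filter] at hj2
    exact hAB _ hj1.2.1 hj2.2.1
  have hd24 : Disjoint s2 s4 := by
    rw [Finset.disjoint_left]; intro j hj1 hj2
    rw [hs2def, Finset.mem_filter] at hj1
    rw [hs4def, Finset.mem_filter] at hj2
    exact hAB _ hj1.2.1 hj2.2.1
  have hd34 : Disjoint s3 s4 := by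
    rw [Finset.disjoint_left]; intro j hj1 hj2
    rw [hs3def, Finset.mem_filter] at hj1
    rw [hs4def, Finset.mem_filter] at hj2
    have h1 := hj1.2.2; have h2 := hj2.2.2; rw [h1] at h2; norm_num at h2
  have hd12_3 : Disjoint (s1 ∪ s2) s3 := by
    rw [Finset.disjoint_union_left]; exact ⟨hd13, hd23⟩
  have hd123_4 : Disjoint (s1 ∪ s2 ∪ s3) s4 := by
    rw [Finset.disjoint_union_left, Finset.disjoint_union_left]; exact ⟨⟨hd14, hd24⟩, hd34⟩
  have hunion : s1 ∪ s2 ∪ s3 ∪ s4 = Finset.univ := by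
    ext j
    simp only [hs1def, hs2def, hs3def, hs4def, Finset.mem_union, Finset.mem_filter,
      Finset.mem_univ, true_and, iff_true]
    rcases ha j with h | h <;> rcases hε j with h' | h' <;> tauto
  have hcardsum : s1.card + s2.card + s3.card + s4.card = p := by
    have e3 : (s1 ∪ s2 ∪ s3 ∪ s4).card = (s1 ∪ s2 ∪ s3).card + s4.card :=
      Finset.card_union_of_disjoint hd123_4
    have e2 : (s1 ∪ s2 ∪ s3).card = (s1 ∪ s2).card + s3.card :=
      Finset.card_union_of_disjoint hd12_3
    have e1 : (s1 ∪ s2).card = s1.card + s2.card :=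
      Finset.card_union_of_disjoint hd12
    rw [hunion] at e3
    simp only [Finset.card_univ, Fintype.card_fin] at e3
    omega
  have hsplit : ξ = (∑ j ∈ s1, a j) - (∑ j ∈ s2, a j) + (∑ j ∈ s3, a j) - (∑ j ∈ s4, a j) := by
    have h0 : ξ = ∑ j ∈ s1 ∪ s2 ∪ s3 ∪ s4, ε j * a j := by rw [hunion]
    rw [Finset.sum_union hd123_4, Finset.sum_union hd12_3, Finset.sum_union hd12] at h0
    have g1 : ∑ j ∈ s1, ε j * a j = ∑ j ∈ s1, a j := by
      refine Finset.sum_congr rfl (fun j hj => ?_)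
      rw [hs1def, Finset.mem_filter] at hj
      rw [hj.2.2, one_mul]
    have g2 : ∑ j ∈ s2, ε j * a j = ∑ j ∈ s2, -(a j) := by
      refine Finset.sum_congr rfl (fun j hj => ?_)
      rw [hs2def, Finset.mem_filter] at hj
      rw [hj.2.2]; ring
    have g3 : ∑ j ∈ s3, ε j * a j = ∑ j ∈ s3, a j := by
      refine Finset.sum_congr rfl (fun j hj => ?_)
      rw [hs3def, Finset.mem_filter] at hj
      rw [hj.2.2, one_mul]
    have g4 : ∑ j ∈ s4, ε j * a j = ∑ j ∈ s4, -(a j) := by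
      refine Finset.sum_congr rfl (fun j hj => ?_)
      rw [hs4def, Finset.mem_filter] at hj
      rw [hj.2.2]; ring
    rw [g1, g2, g3, g4, Finset.sum_neg_distrib, Finset.sum_neg_distrib] at h0
    linarith only [h0]
  have hub1 : (∑ j ∈ s1, a j) ≤ (s1.card : ℝ) * (N + 3*((p:ℝ)+2)/(2*(p:ℝ)^2)) := by
    have h := Finset.sum_le_card_nsmul s1 a (N + 3*((p:ℝ)+2)/(2*(p:ℝ)^2)) (fun j hj => by
      rw [hs1def, Finset.mem_filter] at hj
      exact hj.2.1.2)
    rw [nsmul_eq_mul] at h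
    linarith only [h]
  have hlb1 : (s1.card : ℝ) * (N + 3*((p:ℝ)-1)/(2*(p:ℝ)^2)) ≤ ∑ j ∈ s1, a j := by
    have h := Finset.card_nsmul_le_sum s1 a (N + 3*((p:ℝ)-1)/(2*(p:ℝ)^2)) (fun j hj => by
      rw [hs1def, Finset.mem_filter] at hj
      exact hj.2.1.1)
    rw [nsmul_eq_mul] at h
    linarith only [h]
  have hub2 : (∑ j ∈ s2, a j) ≤ (s2.card : ℝ) * (N + 3*((p:ℝ)+2)/(2*(p:ℝ)^2)) := by
    have h := Finset.sum_le_card_nsmul s2 a (N + 3*((p:ℝ)+2)/(2*(p:ℝ)^2)) (fun j hj => by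
      rw [hs2def, Finset.mem_filter] at hj
      exact hj.2.1.2)
    rw [nsmul_eq_mul] at h
    linarith only [h]
  have hlb2 : (s2.card : ℝ) * (N + 3*((p:ℝ)-1)/(2*(p:ℝ)^2)) ≤ ∑ j ∈ s2, a j := by
    have h := Finset.card_nsmul_le_sum s2 a (N + 3*((p:ℝ)-1)/(2*(p:ℝ)^2)) (fun j hj => by
      rw [hs2def, Finset.mem_filter] at hj
      exact hj.2.1.1)
    rw [nsmul_eq_mul] at h
    linarith only [h]
  have hub3 : (∑ j ∈ s3, a j) ≤ (s3.card : ℝ) * (2*N + 3/(p:ℝ)^2) := by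
    have h := Finset.sum_le_card_nsmul s3 a (2*N + 3/(p:ℝ)^2) (fun j hj => by
      rw [hs3def, Finset.mem_filter] at hj
      exact hj.2.1.2)
    rw [nsmul_eq_mul] at h
    linarith only [h]
  have hlb3 : (s3.card : ℝ) * (2*N) ≤ ∑ j ∈ s3, a j := by
    have h := Finset.card_nsmul_le_sum s3 a (2*N) (fun j hj => by
      rw [hs3def, Finset.mem_filter] at hj
      exact hj.2.1.1)
    rw [nsmul_eq_mul] at h
    linarith only [h]
  have hub4 : (∑ j ∈ s4, a j) ≤ (s4.card : ℝ) * (2*N + 3/(p:ℝ)^2) := by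
    have h := Finset.sum_le_card_nsmul s4 a (2*N + 3/(p:ℝ)^2) (fun j hj => by
      rw [hs4def, Finset.mem_filter] at hj
      exact hj.2.1.2)
    rw [nsmul_eq_mul] at h
    linarith only [h]
  have hlb4 : (s4.card : ℝ) * (2*N) ≤ ∑ j ∈ s4, a j := by
    have h := Finset.card_nsmul_le_sum s4 a (2*N) (fun j hj => by
      rw [hs4def, Finset.mem_filter] at hj
      exact hj.2.1.1)
    rw [nsmul_eq_mul] at h
    linarith only [h]
  have hU : ξ ≤ (s1.card : ℝ) * (N + 3*((p:ℝ)+2)/(2*(p:ℝ)^2))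
      - (s2.card : ℝ) * (N + 3*((p:ℝ)-1)/(2*(p:ℝ)^2))
      + (s3.card : ℝ) * (2*N + 3/(p:ℝ)^2) - (s4.card : ℝ) * (2*N) := by
    rw [hsplit]; linarith only [hub1, hlb2, hub3, hlb4]
  have hL : (s1.card : ℝ) * (N + 3*((p:ℝ)-1)/(2*(p:ℝ)^2))
      - (s2.card : ℝ) * (N + 3*((p:ℝ)+2)/(2*(p:ℝ)^2))
      + (s3.card : ℝ) * (2*N) - (s4.card : ℝ) * (2*N + 3/(p:ℝ)^2) ≤ ξ := by
    rw [hsplit]; linarith only [hlb1, hub2, hlb3, hub4]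
  have hx1nn : (0:ℝ) ≤ (s1.card : ℝ) := Nat.cast_nonneg _
  have hx2nn : (0:ℝ) ≤ (s2.card : ℝ) := Nat.cast_nonneg _
  have hx3nn : (0:ℝ) ≤ (s3.card : ℝ) := Nat.cast_nonneg _
  have hx4nn : (0:ℝ) ≤ (s4.card : ℝ) := Nat.cast_nonneg _
  have hc1 : (s1.card : ℝ) * (N + 3*((p:ℝ)+2)/(2*(p:ℝ)^2)) ≤ (s1.card : ℝ) * (N+1) :=
    mul_le_mul_of_nonneg_left (by linarith only [hfrac1]) hx1nn
  have hc1' : (s1.card : ℝ) * N ≤ (s1.card : ℝ) * (N + 3*((p:ℝ)-1)/(2*(p:ℝ)^2)) :=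
    mul_le_mul_of_nonneg_left (by linarith only [hfrac2]) hx1nn
  have hc2 : (s2.card : ℝ) * (N + 3*((p:ℝ)+2)/(2*(p:ℝ)^2)) ≤ (s2.card : ℝ) * (N+1) :=
    mul_le_mul_of_nonneg_left (by linarith only [hfrac1]) hx2nn
  have hc2' : (s2.card : ℝ) * N ≤ (s2.card : ℝ) * (N + 3*((p:ℝ)-1)/(2*(p:ℝ)^2)) :=
    mul_le_mul_of_nonneg_left (by linarith only [hfrac2]) hx2nn
  have hc3 : (s3.card : ℝ) * (2*N + 3/(p:ℝ)^2) ≤ (s3.card : ℝ) * (2*N+1) :=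
    mul_le_mul_of_nonneg_left (by linarith only [hfrac3]) hx3nn
  have hc4 : (s4.card : ℝ) * (2*N + 3/(p:ℝ)^2) ≤ (s4.card : ℝ) * (2*N+1) :=
    mul_le_mul_of_nonneg_left (by linarith only [hfrac3]) hx4nn
  have hUc : ξ ≤ (s1.card : ℝ) * (N+1) - (s2.card : ℝ) * N
      + (s3.card : ℝ) * (2*N+1) - (s4.card : ℝ) * (2*N) := by
    linarith only [hU, hc1, hc2', hc3]
  have hLc : (s1.card : ℝ) * N - (s2.card : ℝ) * (N+1)
      + (s3.card : ℝ) * (2*N) - (s4.card : ℝ) * (2*N+1) ≤ ξ := by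
    linarith only [hL, hc1', hc2, hc4]
  have hdiv1 : 2/(p:ℝ) ≤ 1 := by rw [div_le_one hppos]; linarith only [hp3R]
  have hdiv2 : 3/(p:ℝ) ≤ 1 := by rw [div_le_one hppos]; linarith only [hp3R]
  have hdiv3 : 4/(p:ℝ) ≤ 2 := by rw [div_le_iff₀ hppos]; linarith only [hp3R]
  have hdiv4 : 4/(p:ℝ)^2 ≤ 1 := by rw [div_le_one (by positivity)]; nlinarith [hp3R]
  have hdiv5 : (0:ℝ) ≤ 8/(p:ℝ)^2 := by positivity
  have hdiv6 : (0:ℝ) ≤ 2/(p:ℝ) := by positivity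
  have hdiv7 : (0:ℝ) ≤ 4/(p:ℝ)^2 := by positivity
  have hxibd : -2 ≤ ξ ∧ ξ ≤ 2 := by
    have h := hξ
    rw [Ip] at h
    split_ifs at h with h1 h2 <;> rw [Set.mem_Icc] at h <;> constructor <;>
      linarith only [h.1, h.2, hdiv1, hdiv2, hdiv3, hdiv4, hdiv5, hdiv6, hdiv7]
  have hcardR : ((s1.card:ℝ)) + s2.card + s3.card + s4.card = p := by
    exact_mod_cast hcardsum
  have hbals := aux_bal (p:ℝ) N ξ ((s1.card:ℝ)) ((s2.card:ℝ)) ((s3.card:ℝ)) ((s4.card:ℝ))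
    hp3R hN hcardR hx1nn hx2nn hx3nn hx4nn hUc hLc hxibd.1 hxibd.2
  have hbalN : s1.card + 2*s3.card = s2.card + 2*s4.card := by
    have h1 : ((s1.card:ℝ)) + 2*s3.card < (s2.card:ℝ) + 2*s4.card + 1 := by
      linarith only [hbals.2]
    have h2 : ((s2.card:ℝ)) + 2*s4.card < (s1.card:ℝ) + 2*s3.card + 1 := by
      linarith only [hbals.1]
    have h1' : s1.card + 2*s3.card < s2.card + 2*s4.card + 1 := by exact_mod_cast h1
    have h2' : s2.card + 2*s4.card < s1.card + 2*s3.card + 1 := by exact_mod_cast h2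
    omega
  have hbalR : ((s1.card:ℝ)) + 2*s3.card = (s2.card:ℝ) + 2*s4.card := by exact_mod_cast hbalN
  have hU4 := aux_clear (p:ℝ) N ξ ((s1.card:ℝ)) ((s2.card:ℝ)) ((s3.card:ℝ)) ((s4.card:ℝ))
    hppos hU hbalR
  refine ⟨?_, ?_, ?_⟩
  · intro hr
    have hxiI : 1 - 2/(p:ℝ) ≤ ξ ∧ ξ ≤ 1 + 2/(p:ℝ) := by
      have h := hξ
      rw [Ip, if_pos hr] at h
      exact Set.mem_Icc.mp h
    have hlow := aux_low0 (p:ℝ) ξ hppos hxiI.1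
    have hkR := aux_k (p:ℝ) ξ ((s1.card:ℝ)) ((s2.card:ℝ)) ((s3.card:ℝ)) ((s4.card:ℝ))
      (4*(p:ℝ)) hp3R hcardR hbalR hx2nn hx3nn hx4nn hU4 hlow (by linarith only [hp3R])
    have hknat : s2.card + s3.card ≤ 2 := by
      have : ((s2.card + s3.card : ℕ) : ℝ) < 3 := by push_cast; linarith only [hkR]
      have h3 : s2.card + s3.card < 3 := by exact_mod_cast this
      omega
    simp only [Prod.mk.injEq]
    omega
  · intro hr
    have hxiI : 1 - 4/(p:ℝ) + 4/(p:ℝ)^2 ≤ ξ ∧ ξ ≤ 1 - 4/(p:ℝ)^2 := by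
      have h := hξ
      rw [Ip, if_neg (by omega), if_neg (by omega)] at h
      exact Set.mem_Icc.mp h
    have hlow := aux_low2 (p:ℝ) ξ hppos hxiI.1
    have hkR := aux_k (p:ℝ) ξ ((s1.card:ℝ)) ((s2.card:ℝ)) ((s3.card:ℝ)) ((s4.card:ℝ))
      (8*(p:ℝ) - 8) hp3R hcardR hbalR hx2nn hx3nn hx4nn hU4 hlow (by linarith only [hp3R])
    have hknat : s2.card + s3.card ≤ 2 := by
      have : ((s2.card + s3.card : ℕ) : ℝ) < 3 := by push_cast; linarith only [hkR]
      have h3 : s2.card + s3.card < 3 := by exact_mod_cast this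
      omega
    simp only [Prod.mk.injEq]
    omega
  · intro hr
    have hp7 : 7 ≤ p := by omega
    have hp7R : (7:ℝ) ≤ (p:ℝ) := by exact_mod_cast hp7
    have hxiI : 1 - 3/(p:ℝ) - 4/(p:ℝ)^2 ≤ ξ ∧ ξ ≤ 1 - 2/(p:ℝ) - 8/(p:ℝ)^2 := by
      have h := hξ
      rw [Ip, if_neg (by omega), if_pos hr] at h
      exact Set.mem_Icc.mp h
    have hlow := aux_low1 (p:ℝ) ξ hppos hxiI.1
    have hkR := aux_k1 (p:ℝ) ξ ((s1.card:ℝ)) ((s2.card:ℝ)) ((s3.card:ℝ)) ((s4.card:ℝ))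
      hp7R hcardR hbalR hx2nn hx3nn hx4nn hU4 hlow
    have hknat : s2.card + s3.card ≤ 2 := by
      have : ((s2.card + s3.card : ℕ) : ℝ) < 3 := by push_cast; linarith only [hkR]
      have h3 : s2.card + s3.card < 3 := by exact_mod_cast this
      omega
    have hcases : (s2.card = 2 ∧ s3.card = 0) ∨ (s2.card = 1 ∧ s3.card = 1) ∨
        (s2.card = 0 ∧ s3.card = 2) := by omega
    rcases hcases with ⟨h2,h3⟩|⟨h2,h3⟩|⟨h2,h3⟩
    · exact Or.inl (by simp only [Prod.mk.injEq]; exact ⟨by omega, h2, h3, by omega⟩)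
    · exact Or.inr (Or.inl (by simp only [Prod.mk.injEq]; exact ⟨by omega, h2, h3, by omega⟩))
    · exact Or.inr (Or.inr (by simp only [Prod.mk.injEq]; exact ⟨by omega, h2, h3, by omega⟩))
end
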